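/- arXiv:2311.13525 — 4 statements merged into one kernel-verified Lean document; each statement's English description precedes it below -/
import Mathlib

section
/- Let G be a finite group, H ≤ G a subgroup, and T ⊆ G a set of representatives for the right cosets Hσ with Hσ ≠ H. Let ⟨·,·⟩ be the bilinear form on ℚ[G]/(ℚ·G̃) induced by the form on ℚ[G] with ⟨g, g'⟩ = δ_{g,g'} − 1/|G|. Then the classes of the elements H̃σ = Σ_{h∈H} hσ for σ ∈ T form a ℤ-basis of the H-fixed submodule (A_G)^H of A_G = ℤ[G]/(G̃), and the determinant of the ((G:H)−1) × ((G:H)−1) matrix with entries (1/|H|)·⟨class of H̃σ, class of H̃τ⟩ for σ, τ ∈ T is equal to |H|/|G|. -/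
open scoped BigOperators

noncomputable section

/-- The element G̃ = ∑_{σ ∈ G} σ of the integral group ring ℤ[G]. -/
def gTilde (G : Type) [Group G] [Fintype G] : MonoidAlgebra ℤ G :=
  ∑ g : G, MonoidAlgebra.single g 1

-- The element H̃ = ∑_{h ∈ H} h of ℤ[G], for a subgroup H of G.
open Classical in
def hTilde {G : Type} [Group G] [Fintype G] (H : Subgroup G) : MonoidAlgebra ℤ G :=
  ∑ h ∈ Finset.univ.filter (fun g => g ∈ H), MonoidAlgebra.single h 1

/-- The standard cyclic lattice A_G = ℤ[G]/(G̃). -/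
abbrev cyclicLattice (G : Type) [Group G] [Fintype G] : Type :=
  MonoidAlgebra ℤ G ⧸ Submodule.span (MonoidAlgebra ℤ G) {gTilde G}

/-- The H-fixed points of a ℤ[G]-module, as an additive subgroup. -/
def fixedAddSubgroup {G : Type} [Group G] (H : Subgroup G) (M : Type*) [AddCommGroup M]
    [Module (MonoidAlgebra ℤ G) M] : AddSubgroup M where
  carrier := {x | ∀ h ∈ H, (MonoidAlgebra.single h 1 : MonoidAlgebra ℤ G) • x = x}
  zero_mem' := by intro h _; simp
  add_mem' := by intro a b ha hb h hh; rw [smul_add, ha h hh, hb h hh]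
  neg_mem' := by intro a ha h hh; rw [smul_neg, ha h hh]

/-- The bilinear extension of ⟨g,g'⟩ = δ_{g,g'} − 1/|G| on ℚ[G]. -/
def diagForm (G : Type) [Group G] [Fintype G] (x y : MonoidAlgebra ℚ G) : ℚ :=
  (∑ g : G, x.coeff g * y.coeff g) - ((Fintype.card G : ℚ))⁻¹ * (∑ g : G, x.coeff g) * (∑ g : G, y.coeff g)

/-- The canonical map ℤ[G] → ℚ[G]. -/
def intToRat (G : Type) [Group G] (x : MonoidAlgebra ℤ G) : MonoidAlgebra ℚ G :=
  MonoidAlgebra.ofCoeff (Finsupp.mapRange (Int.cast) (by simp) x.coeff)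

/-- The form on A_G = ℤ[G]/(G̃) induced by `diagForm` (this is well defined, i.e. independent
of the choice of representatives, since `diagForm` vanishes on ℚ·G̃). -/
def cyclicLatticeForm (G : Type) [Group G] [Fintype G] (x y : cyclicLattice G) : ℚ :=
  diagForm G (intToRat G (Quotient.out x)) (intToRat G (Quotient.out y))

set_option linter.unusedSectionVars false

instance monoidAlgebraCoeFun {R M : Type} [Semiring R] :
    CoeFun (MonoidAlgebra R M) (fun _ => M → R) := ⟨fun x => x.coeff⟩

variable {G : Type} [Group G] [Fintype G] [DecidableEq G] (H : Subgroup G)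

lemma gTilde_apply (g : G) : gTilde G g = 1 := by
  rw [gTilde, MonoidAlgebra.coeff_sum, Finset.sum_apply']
  simp [MonoidAlgebra.single_apply]

open Classical in
lemma hTilde_apply (g : G) : hTilde H g = if g ∈ H then 1 else 0 := by
  rw [hTilde, MonoidAlgebra.coeff_sum, Finset.sum_apply']
  simp [MonoidAlgebra.single_apply, Finsupp.single_apply]

open Classical in
lemma hsigma_apply (σ g : G) :
    (hTilde H * MonoidAlgebra.single σ (1:ℤ)) g = if g * σ⁻¹ ∈ H then 1 else 0 := by
  rw [MonoidAlgebra.mul_single_apply, hTilde_apply, mul_one]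

lemma zsmul_gTilde_apply (c : ℤ) (g : G) : (c • gTilde G) g = c := by
  show c * gTilde G g = c
  rw [gTilde_apply, mul_one]

lemma mul_gTilde_apply (a : MonoidAlgebra ℤ G) (g : G) :
    (a * gTilde G) g = ∑ k : G, a k := by
  rw [gTilde, Finset.mul_sum, MonoidAlgebra.coeff_sum, Finset.sum_apply']
  rw [Finset.sum_congr rfl (fun k _ => MonoidAlgebra.mul_single_apply a 1 k g)]
  simp only [mul_one]
  exact Fintype.sum_equiv ((Equiv.inv G).trans (Equiv.mulLeft g)) _ _ (fun k => rfl)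

lemma mem_span_gTilde (x : MonoidAlgebra ℤ G) :
    x ∈ Submodule.span (MonoidAlgebra ℤ G) {gTilde G} ↔ ∃ c : ℤ, x = c • gTilde G := by
  rw [Submodule.mem_span_singleton]
  constructor
  · rintro ⟨a, rfl⟩
    refine ⟨∑ k : G, a k, ?_⟩
    ext g
    rw [smul_eq_mul, mul_gTilde_apply, zsmul_gTilde_apply]
  · rintro ⟨c, rfl⟩
    refine ⟨MonoidAlgebra.single 1 c, ?_⟩
    ext g
    rw [smul_eq_mul, MonoidAlgebra.single_mul_apply, zsmul_gTilde_apply, gTilde_apply, mul_one]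

lemma single_mul_hTilde {h : G} (hh : h ∈ H) :
    MonoidAlgebra.single h (1:ℤ) * hTilde H = hTilde H := by
  classical
  ext g
  rw [MonoidAlgebra.single_mul_apply, hTilde_apply, hTilde_apply, one_mul]
  congr 1
  simp [H.mul_mem_cancel_left (H.inv_mem hh)]

lemma single_mul_gTilde (h : G) :
    MonoidAlgebra.single h (1:ℤ) * gTilde G = gTilde G := by
  ext g
  rw [MonoidAlgebra.single_mul_apply, gTilde_apply, gTilde_apply, one_mul]

lemma mk_out (x : cyclicLattice G) : Submodule.Quotient.mk (Quotient.out x) = x := by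
  rw [← Submodule.Quotient.mk''_eq_mk]; exact Quotient.out_eq' x

lemma fixed_invariance {y : MonoidAlgebra ℤ G}
    (hy : ∀ h ∈ H, Submodule.Quotient.mk (MonoidAlgebra.single h 1 * y)
      = (Submodule.Quotient.mk y : cyclicLattice G)) :
    ∀ h ∈ H, ∀ g, y (h⁻¹ * g) = y g := by
  intro h hh
  obtain ⟨c, hc⟩ := (mem_span_gTilde _).mp
    ((Submodule.Quotient.eq _).mp (hy h hh))
  have key : ∀ g, y (h⁻¹ * g) = y g + c := by
    intro g
    have h1 : (MonoidAlgebra.single h (1:ℤ) * y - y) g = (c • gTilde G) g :=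
      congrArg (fun z : MonoidAlgebra ℤ G => z g) hc
    have h2 : (MonoidAlgebra.single h (1:ℤ) * y) g - y g = c := by
      rw [← zsmul_gTilde_apply c g]; exact h1
    rw [MonoidAlgebra.single_mul_apply, one_mul] at h2
    omega
  have pow : ∀ n : ℕ, ∀ g, y ((h ^ n)⁻¹ * g) = y g + n * c := by
    intro n
    induction n with
    | zero => intro g; simp
    | succ n ih =>
      intro g
      have : (h ^ (n+1))⁻¹ * g = h⁻¹ * ((h ^ n)⁻¹ * g) := by
        rw [pow_succ, mul_inv_rev, mul_assoc]
      rw [this, key, ih]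
      push_cast; ring
  have hord := pow (orderOf h) 1
  rw [pow_orderOf_eq_one h] at hord
  have hc0 : c = 0 := by
    have hpos : 0 < orderOf h := orderOf_pos h
    simp only [inv_one, one_mul] at hord
    nlinarith [hord, hpos]
  intro g
  rw [key g, hc0, add_zero]

lemma fixed_decomp (T : Finset G) (hT1 : ∀ σ ∈ T, σ ∉ H)
    (hT2 : ∀ g : G, g ∉ H → ∃! σ, σ ∈ T ∧ g * σ⁻¹ ∈ H)
    {y : MonoidAlgebra ℤ G} (hy : ∀ h ∈ H, ∀ g, y (h⁻¹ * g) = y g) :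
    y = (∑ σ ∈ T, (y σ - y 1) • (hTilde H * MonoidAlgebra.single σ (1:ℤ)))
      + y 1 • gTilde G := by
  classical
  ext g
  rw [MonoidAlgebra.coeff_add, Finsupp.add_apply, MonoidAlgebra.coeff_sum, Finset.sum_apply', zsmul_gTilde_apply]
  rw [Finset.sum_congr rfl (fun σ _ => by
    rw [MonoidAlgebra.coeff_smul_apply, hsigma_apply, smul_eq_mul])]
  by_cases hg : g ∈ H
  · rw [Finset.sum_eq_zero, zero_add]
    · have := hy g⁻¹ (H.inv_mem hg) 1
      rw [inv_inv, mul_one] at this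
      exact this
    · intro σ hσ
      have : g * σ⁻¹ ∉ H := by
        intro hmem
        exact hT1 σ hσ (by simpa using H.mul_mem (H.inv_mem hmem) hg)
      rw [if_neg this, mul_zero]
  · obtain ⟨σ₀, ⟨hσ₀T, hσ₀⟩, huniq⟩ := hT2 g hg
    rw [Finset.sum_eq_single σ₀]
    · rw [if_pos hσ₀, mul_one]
      have h1 := hy (g * σ₀⁻¹) hσ₀ g
      have : (g * σ₀⁻¹)⁻¹ * g = σ₀ := by group
      rw [this] at h1
      rw [← h1]; ring
    · intro σ hσT hne
      rw [if_neg (fun hmem => hne (huniq σ ⟨hσT, hmem⟩)), mul_zero]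
    · intro hn; exact absurd hσ₀T hn


def coordFun (T : Finset G) (x : cyclicLattice G) : T → ℤ :=
  fun σ => (Quotient.out x) (σ : G) - (Quotient.out x) 1

lemma coordFun_mk (T : Finset G) (x : MonoidAlgebra ℤ G) (σ : T) :
    coordFun T (Submodule.Quotient.mk x) σ = x (σ : G) - x 1 := by
  set y := Quotient.out (Submodule.Quotient.mk x :
    cyclicLattice G) with hy
  obtain ⟨c, hc⟩ := (mem_span_gTilde (y - x)).mp
    ((Submodule.Quotient.eq _).mp (mk_out _))
  have hptw : ∀ g : G, y g = x g + c := by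
    intro g
    have h1 : (y - x) g = (c • gTilde G) g :=
      congrArg (fun z : MonoidAlgebra ℤ G => z g) hc
    have h2 : y g - x g = c := by rw [← zsmul_gTilde_apply c g]; exact h1
    omega
  show y (σ : G) - y 1 = x (σ : G) - x 1
  rw [hptw, hptw]; ring

lemma hsigma_mem_fixed (σ : G) :
    (Submodule.Quotient.mk (hTilde H * MonoidAlgebra.single σ (1:ℤ)) : cyclicLattice G)
      ∈ fixedAddSubgroup H (cyclicLattice G) := by
  intro h hh
  rw [← Submodule.Quotient.mk_smul, smul_eq_mul, ← mul_assoc, single_mul_hTilde H hh]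

lemma part1 (T : Finset G)
    (hT1 : ∀ σ ∈ T, σ ∉ H)
    (hT2 : ∀ g : G, g ∉ H → ∃! σ, σ ∈ T ∧ g * σ⁻¹ ∈ H) :
    ∃ b : Module.Basis T ℤ (fixedAddSubgroup H (cyclicLattice G)),
        ∀ σ : T, (b σ : cyclicLattice G) =
          Submodule.Quotient.mk (hTilde H * MonoidAlgebra.single (σ : G) 1) := by
  classical
  -- the inverse map
  have memsum : ∀ c : T → ℤ,
      (Submodule.Quotient.mk (∑ σ : T, c σ • (hTilde H * MonoidAlgebra.single (σ:G) (1:ℤ))) :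
        cyclicLattice G) ∈ fixedAddSubgroup H (cyclicLattice G) := by
    intro c h hh
    rw [← Submodule.Quotient.mk_smul, smul_eq_mul, Finset.mul_sum]
    congr 1
    refine Finset.sum_congr rfl (fun σ _ => ?_)
    rw [mul_smul_comm, ← mul_assoc, single_mul_hTilde H hh]
  set f : fixedAddSubgroup H (cyclicLattice G) → (T → ℤ) :=
    fun x => coordFun T x.1 with hf
  set m : (T → ℤ) → fixedAddSubgroup H (cyclicLattice G) :=
    fun c => ⟨Submodule.Quotient.mk
      (∑ σ : T, c σ • (hTilde H * MonoidAlgebra.single (σ:G) (1:ℤ))), memsum c⟩ with hm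
  have hsig_coeff : ∀ (σ : T) (g : G),
      (hTilde H * MonoidAlgebra.single ((σ:G)) (1:ℤ)) g = if g * (σ:G)⁻¹ ∈ H then 1 else 0 := by
    intro σ g
    rw [hsigma_apply]
  have sum_coeff : ∀ (c : T → ℤ) (g : G),
      (∑ σ : T, c σ • (hTilde H * MonoidAlgebra.single (σ:G) (1:ℤ))) g
        = ∑ σ : T, c σ * (if g * (σ:G)⁻¹ ∈ H then 1 else 0) := by
    intro c g
    rw [MonoidAlgebra.coeff_sum, Finset.sum_apply']
    exact Finset.sum_congr rfl (fun σ _ => by rw [MonoidAlgebra.coeff_smul_apply, hsig_coeff, smul_eq_mul])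
  have right_inv : ∀ c : T → ℤ, f (m c) = c := by
    intro c
    funext σ
    show coordFun T _ σ = c σ
    rw [coordFun_mk, sum_coeff, sum_coeff]
    have h1 : ∑ τ : T, c τ * (if (σ:G) * (τ:G)⁻¹ ∈ H then 1 else 0) = c σ := by
      rw [Finset.sum_eq_single σ]
      · rw [if_pos (by simp [H.one_mem]), mul_one]
      · intro τ _ hne
        rw [if_neg, mul_zero]
        intro hmem
        obtain ⟨σ₀, _, huniq⟩ := hT2 (σ:G) (hT1 _ σ.2)
        exact hne (Subtype.ext ((huniq _ ⟨τ.2, hmem⟩).trans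
          (huniq _ ⟨σ.2, by simp [H.one_mem]⟩).symm))
      · intro hn; exact absurd (Finset.mem_univ σ) hn
    have h2 : ∑ τ : T, c τ * (if (1:G) * (τ:G)⁻¹ ∈ H then 1 else 0) = 0 := by
      refine Finset.sum_eq_zero (fun τ _ => ?_)
      rw [if_neg, mul_zero]
      intro hmem
      exact hT1 _ τ.2 (by simpa using H.inv_mem hmem)
    rw [h1, h2, sub_zero]
  have left_inv : ∀ x : fixedAddSubgroup H (cyclicLattice G), m (f x) = x := by
    intro x
    apply Subtype.ext
    set y := Quotient.out x.1 with hy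
    have hmky : Submodule.Quotient.mk y = x.1 := mk_out x.1
    have hfix : ∀ h ∈ H, Submodule.Quotient.mk (MonoidAlgebra.single h 1 * y)
        = (Submodule.Quotient.mk y : cyclicLattice G) := by
      intro h hh
      rw [← smul_eq_mul, Submodule.Quotient.mk_smul, hmky, x.2 h hh]
    have hinv := fixed_invariance H hfix
    have hdec := fixed_decomp H T hT1 hT2 hinv
    show Submodule.Quotient.mk _ = x.1
    have hfy : ∀ σ : T, f x σ = y (σ:G) - y 1 := fun σ => rfl
    calc Submodule.Quotient.mk (∑ σ : T, f x σ • (hTilde H * MonoidAlgebra.single (σ:G) (1:ℤ)))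
        = Submodule.Quotient.mk (∑ σ ∈ T, (y σ - y 1) • (hTilde H * MonoidAlgebra.single σ (1:ℤ))) := by
          congr 1
          rw [← Finset.sum_coe_sort T (fun σ => (y σ - y 1) • (hTilde H * MonoidAlgebra.single σ (1:ℤ)))]
          exact Finset.sum_congr rfl (fun σ _ => by rw [hfy])
      _ = Submodule.Quotient.mk (y - y 1 • gTilde G) := by
          congr 1
          rw [eq_sub_iff_add_eq, ← hdec]
      _ = x.1 := by
          rw [Submodule.Quotient.mk_sub, Submodule.Quotient.mk_smul,
            (Submodule.Quotient.mk_eq_zero _).mpr (Submodule.mem_span_singleton_self _),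
            smul_zero, sub_zero, hmky]
  have map_add : ∀ x y : fixedAddSubgroup H (cyclicLattice G), f (x + y) = f x + f y := by
    intro a b
    funext σ
    have hab : a.1 + b.1 = Submodule.Quotient.mk (Quotient.out a.1 + Quotient.out b.1) := by
      rw [Submodule.Quotient.mk_add, mk_out, mk_out]
    show coordFun T (a.1 + b.1) σ = coordFun T a.1 σ + coordFun T b.1 σ
    rw [hab, coordFun_mk]
    have e1 : (Quotient.out a.1 + Quotient.out b.1) (σ:G)
        = Quotient.out a.1 (σ:G) + Quotient.out b.1 (σ:G) := rfl
    have e2 : (Quotient.out a.1 + Quotient.out b.1) (1:G)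
        = Quotient.out a.1 (1:G) + Quotient.out b.1 (1:G) := rfl
    rw [e1, e2]
    show _ = (Quotient.out a.1 (σ:G) - Quotient.out a.1 1)
      + (Quotient.out b.1 (σ:G) - Quotient.out b.1 1)
    ring
  set e : fixedAddSubgroup H (cyclicLattice G) ≃+ (T → ℤ) :=
    { toFun := f, invFun := m, left_inv := left_inv, right_inv := right_inv,
      map_add' := map_add } with he
  refine ⟨(Pi.basisFun ℤ T).map e.toIntLinearEquiv.symm, fun σ => ?_⟩
  rw [Module.Basis.map_apply, Pi.basisFun_apply]
  have : (e.toIntLinearEquiv (modM := inferInstance) (modM₂ := inferInstance)).symm (Pi.single σ 1)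
      = ⟨Submodule.Quotient.mk (hTilde H * MonoidAlgebra.single (σ:G) 1),
          hsigma_mem_fixed H (σ:G)⟩ := by
    apply (AddEquiv.toIntLinearEquiv e).symm_apply_eq.mpr
    rw [AddEquiv.coe_toIntLinearEquiv]
    funext τ
    simp only [he, hf, AddEquiv.coe_mk, Equiv.coe_fn_mk]
    rw [coordFun_mk, hsig_coeff, hsig_coeff]
    have hz : (if (1:G) * (σ:G)⁻¹ ∈ H then (1:ℤ) else 0) = 0 :=
      if_neg (fun hmem => hT1 _ σ.2 (by simpa using H.inv_mem hmem))
    rw [hz, sub_zero]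
    rcases eq_or_ne τ σ with h | h
    · subst h
      rw [Pi.single_eq_same, if_pos (by simp [H.one_mem])]
    · rw [Pi.single_eq_of_ne h, if_neg]
      intro hmem
      obtain ⟨σ₀, _, huniq⟩ := hT2 (τ:G) (hT1 _ τ.2)
      exact h (Subtype.ext ((huniq (τ:G) ⟨τ.2, by simp [H.one_mem]⟩).trans
        (huniq (σ:G) ⟨σ.2, hmem⟩).symm))
  rw [this]


lemma intToRat_apply (x : MonoidAlgebra ℤ G) (g : G) : intToRat G x g = ((x g : ℤ) : ℚ) :=
  Finsupp.mapRange_apply (hf := Int.cast_zero)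

lemma diagForm_shift (c d : ℚ) (x x' y y' : MonoidAlgebra ℚ G)
    (hx : ∀ g, x' g = x g + c) (hy : ∀ g, y' g = y g + d) :
    diagForm G x' y' = diagForm G x y := by
  have hN : (Fintype.card G : ℚ) ≠ 0 := Nat.cast_ne_zero.mpr Fintype.card_ne_zero
  simp only [diagForm, hx, hy]
  have e1 : ∑ g : G, (x g + c) * (y g + d)
      = (∑ g : G, x g * y g) + d * (∑ g : G, x g) + c * (∑ g : G, y g)
        + (Fintype.card G : ℚ) * (c * d) := by
    rw [Finset.sum_congr rfl
      (fun g _ => show (x g + c) * (y g + d) = x g * y g + d * x g + c * y g + c * d by ring)]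
    simp [Finset.sum_add_distrib, Finset.mul_sum, Finset.card_univ]
  have e2 : ∑ g : G, (x g + c) = (∑ g : G, x g) + (Fintype.card G : ℚ) * c := by
    simp [Finset.sum_add_distrib, Finset.card_univ, mul_comm]
  have e3 : ∑ g : G, (y g + d) = (∑ g : G, y g) + (Fintype.card G : ℚ) * d := by
    simp [Finset.sum_add_distrib, Finset.card_univ, mul_comm]
  rw [e1, e2, e3]
  field_simp
  ring

lemma cyclicLatticeForm_mk (x y : MonoidAlgebra ℤ G) :
    cyclicLatticeForm G (Submodule.Quotient.mk x) (Submodule.Quotient.mk y)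
      = diagForm G (intToRat G x) (intToRat G y) := by
  obtain ⟨c, hc⟩ := (mem_span_gTilde
    (Quotient.out (Submodule.Quotient.mk x : cyclicLattice G) - x)).mp
    ((Submodule.Quotient.eq _).mp (mk_out _))
  obtain ⟨d, hd⟩ := (mem_span_gTilde
    (Quotient.out (Submodule.Quotient.mk y : cyclicLattice G) - y)).mp
    ((Submodule.Quotient.eq _).mp (mk_out _))
  refine diagForm_shift (c : ℚ) (d : ℚ) _ _ _ _ ?_ ?_
  · intro g
    have h1 : (Quotient.out (Submodule.Quotient.mk x : cyclicLattice G) - x) g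
        = (c • gTilde G) g := congrArg (fun z : MonoidAlgebra ℤ G => z g) hc
    have h2 : Quotient.out (Submodule.Quotient.mk x : cyclicLattice G) g - x g = c := by
      rw [← zsmul_gTilde_apply c g]; exact h1
    rw [intToRat_apply, intToRat_apply]
    have : Quotient.out (Submodule.Quotient.mk x : cyclicLattice G) g = x g + c := by omega
    rw [this]; push_cast; ring
  · intro g
    have h1 : (Quotient.out (Submodule.Quotient.mk y : cyclicLattice G) - y) g
        = (d • gTilde G) g := congrArg (fun z : MonoidAlgebra ℤ G => z g) hd
    have h2 : Quotient.out (Submodule.Quotient.mk y : cyclicLattice G) g - y g = d := by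
      rw [← zsmul_gTilde_apply d g]; exact h1
    rw [intToRat_apply, intToRat_apply]
    have : Quotient.out (Submodule.Quotient.mk y : cyclicLattice G) g = y g + d := by omega
    rw [this]; push_cast; ring

open Classical in
lemma part2 (T : Finset G)
    (hT1 : ∀ σ ∈ T, σ ∉ H)
    (hT2 : ∀ g : G, g ∉ H → ∃! σ, σ ∈ T ∧ g * σ⁻¹ ∈ H) :
    Matrix.det (Matrix.of fun (σ τ : T) =>
          ((Nat.card H : ℚ))⁻¹ * cyclicLatticeForm G
            (Submodule.Quotient.mk (hTilde H * MonoidAlgebra.single (σ : G) 1))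
            (Submodule.Quotient.mk (hTilde H * MonoidAlgebra.single (τ : G) 1))) =
        (Nat.card H : ℚ) / (Fintype.card G : ℚ) := by
  set m0 := (Finset.univ.filter (fun g : G => g ∈ H)).card with hm0
  have hm0card : m0 = Nat.card H := by
    rw [hm0, Nat.card_eq_fintype_card, Fintype.card_subtype]
  have hN : (Fintype.card G : ℚ) ≠ 0 := Nat.cast_ne_zero.mpr Fintype.card_ne_zero
  have hm0pos : 0 < m0 := Finset.card_pos.mpr ⟨1, by simp [H.one_mem]⟩
  have hm0Q : (m0 : ℚ) ≠ 0 := Nat.cast_ne_zero.mpr hm0pos.ne'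
  have hcoe : ∀ (σ g : G), intToRat G (hTilde H * MonoidAlgebra.single σ 1) g
      = if g * σ⁻¹ ∈ H then (1:ℚ) else 0 := by
    intro σ g
    rw [intToRat_apply, hsigma_apply]
    split_ifs <;> simp
  have sum1 : ∀ σ : G, ∑ g : G, (if g * σ⁻¹ ∈ H then (1:ℚ) else 0) = m0 := by
    intro σ
    rw [Finset.sum_boole]
    congr 1
    refine Finset.card_bij' (fun g _ => g * σ⁻¹) (fun g _ => g * σ) ?_ ?_ ?_ ?_
    · intro g hg; simp only [Finset.mem_filter, Finset.mem_univ, true_and] at hg ⊢; exact hg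
    · intro g hg; simp only [Finset.mem_filter, Finset.mem_univ, true_and] at hg ⊢
      simpa [mul_assoc] using hg
    · intro g _; simp [mul_assoc]
    · intro g _; simp [mul_assoc]
  have prodsum : ∀ σ τ : T,
      ∑ g : G, (if g * (σ:G)⁻¹ ∈ H then (1:ℚ) else 0) * (if g * (τ:G)⁻¹ ∈ H then 1 else 0)
        = if σ = τ then (m0:ℚ) else 0 := by
    intro σ τ
    rcases eq_or_ne σ τ with rfl | hne
    · rw [if_pos rfl, ← sum1 (σ:G)]
      exact Finset.sum_congr rfl (fun g _ => by split_ifs <;> norm_num)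
    · rw [if_neg hne]
      refine Finset.sum_eq_zero (fun g _ => ?_)
      split_ifs with h1 h2
      · exfalso
        have hg : g ∉ H := by
          intro hg
          exact hT1 _ σ.2 (by simpa using H.mul_mem (H.inv_mem h1) hg)
        obtain ⟨σ₀, _, huniq⟩ := hT2 g hg
        exact hne (Subtype.ext ((huniq _ ⟨σ.2, h1⟩).trans (huniq _ ⟨τ.2, h2⟩).symm))
      all_goals norm_num
  have formval : ∀ σ τ : T,
      cyclicLatticeForm G
        (Submodule.Quotient.mk (hTilde H * MonoidAlgebra.single (σ:G) 1))
        (Submodule.Quotient.mk (hTilde H * MonoidAlgebra.single (τ:G) 1))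
      = (if σ = τ then (m0:ℚ) else 0) - (Fintype.card G : ℚ)⁻¹ * m0 * m0 := by
    intro σ τ
    rw [cyclicLatticeForm_mk]
    simp only [diagForm]
    have e1 : ∑ g : G, intToRat G (hTilde H * MonoidAlgebra.single (σ:G) 1) g
        * intToRat G (hTilde H * MonoidAlgebra.single (τ:G) 1) g
        = if σ = τ then (m0:ℚ) else 0 := by
      rw [← prodsum σ τ]
      exact Finset.sum_congr rfl (fun g _ => by rw [hcoe, hcoe])
    have e2 : ∑ g : G, intToRat G (hTilde H * MonoidAlgebra.single (σ:G) 1) g = m0 := by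
      rw [← sum1 (σ:G)]
      exact Finset.sum_congr rfl (fun g _ => by rw [hcoe])
    have e3 : ∑ g : G, intToRat G (hTilde H * MonoidAlgebra.single (τ:G) 1) g = m0 := by
      rw [← sum1 (τ:G)]
      exact Finset.sum_congr rfl (fun g _ => by rw [hcoe])
    rw [e1, e2, e3]
  have hcardnat : T.card * m0 + m0 = Fintype.card G := by
    have h1 := Finset.card_filter_add_card_filter_not
      (s := (Finset.univ : Finset G)) (fun g : G => g ∈ H)
    have h2 : (T ×ˢ Finset.univ.filter (fun g : G => g ∈ H)).card
        = (Finset.univ.filter (fun g : G => ¬ g ∈ H)).card := by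
      refine Finset.card_bij (fun p _ => p.2 * p.1) ?_ ?_ ?_
      · rintro ⟨σ, h⟩ hp
        rw [Finset.mem_product] at hp
        simp only [Finset.mem_filter, Finset.mem_univ, true_and] at hp ⊢
        intro hmem
        exact hT1 σ hp.1 (by simpa using H.mul_mem (H.inv_mem hp.2) hmem)
      · rintro ⟨σ₁, h₁⟩ hp₁ ⟨σ₂, h₂⟩ hp₂ heq
        rw [Finset.mem_product] at hp₁ hp₂
        simp only [Finset.mem_filter, Finset.mem_univ, true_and] at hp₁ hp₂
        simp only at heq
        have hg : h₁ * σ₁ ∉ H := by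
          intro hmem
          exact hT1 σ₁ hp₁.1 (by simpa using H.mul_mem (H.inv_mem hp₁.2) hmem)
        obtain ⟨σ₀, _, huniq⟩ := hT2 (h₁ * σ₁) hg
        have hs : σ₁ = σ₂ := by
          refine (huniq σ₁ ⟨hp₁.1, by simpa using hp₁.2⟩).trans
            (huniq σ₂ ⟨hp₂.1, ?_⟩).symm
          rw [heq]; simpa using hp₂.2
        subst hs
        have : h₁ = h₂ := by
          have := mul_right_cancel heq
          exact this
        subst this
        rfl
      · intro g hg
        simp only [Finset.mem_filter, Finset.mem_univ, true_and] at hg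
        obtain ⟨σ, ⟨hσT, hσH⟩, _⟩ := hT2 g hg
        refine ⟨⟨σ, g * σ⁻¹⟩, ?_, by simp⟩
        rw [Finset.mem_product]
        simp only [Finset.mem_filter, Finset.mem_univ, true_and]
        exact ⟨hσT, hσH⟩
    rw [Finset.card_product, ← hm0] at h2
    rw [← hm0, Finset.card_univ] at h1
    omega
  have hcardQ : (T.card : ℚ) * m0 = (Fintype.card G : ℚ) - m0 := by
    have := congrArg (fun n : ℕ => (n : ℚ)) hcardnat
    push_cast at this
    linarith
  have hA : (Matrix.of fun (σ τ : T) =>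
          ((Nat.card H : ℚ))⁻¹ * cyclicLatticeForm G
            (Submodule.Quotient.mk (hTilde H * MonoidAlgebra.single (σ : G) 1))
            (Submodule.Quotient.mk (hTilde H * MonoidAlgebra.single (τ : G) 1)))
      = 1 + Matrix.replicateCol Unit (fun _ : T => -((m0:ℚ)/(Fintype.card G : ℚ)))
          * Matrix.replicateRow Unit (fun _ : T => (1:ℚ)) := by
    ext σ τ
    rw [Matrix.of_apply, formval σ τ, ← hm0card]
    simp only [Matrix.add_apply, Matrix.one_apply, Matrix.mul_apply, Matrix.replicateCol_apply,
      Matrix.replicateRow_apply, Finset.univ_unique, Finset.sum_singleton, mul_one]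
    split_ifs with h
    · field_simp; ring
    · field_simp; ring
  rw [hA, Matrix.det_one_add_replicateCol_mul_replicateRow]
  have : dotProduct (fun _ : T => (1:ℚ))
      (fun _ : T => -((m0:ℚ)/(Fintype.card G : ℚ)))
      = (T.card : ℚ) * (-((m0:ℚ)/(Fintype.card G : ℚ))) := by
    simp [dotProduct, Finset.sum_const, Fintype.card_coe, nsmul_eq_mul]
  rw [this, ← hm0card]
  field_simp
  linarith [hcardQ]

/-- For a subgroup H of a finite group G and a transversal T of the nontrivial right cosets
of H, the classes of the elements H̃σ, σ ∈ T, form a ℤ-basis of (A_G)^H, and the Gram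
determinant of (1/|H|)·⟨·,·⟩ on this basis equals |H|/|G|. -/
theorem cyclicLattice_fixed_basis_and_gram_det
    (G : Type) [Group G] [Fintype G] [DecidableEq G] (H : Subgroup G) (T : Finset G)
    (hT1 : ∀ σ ∈ T, σ ∉ H)
    (hT2 : ∀ g : G, g ∉ H → ∃! σ, σ ∈ T ∧ g * σ⁻¹ ∈ H) :
    (∃ b : Module.Basis T ℤ (fixedAddSubgroup H (cyclicLattice G)),
        ∀ σ : T, (b σ : cyclicLattice G) =
          Submodule.Quotient.mk (hTilde H * MonoidAlgebra.single (σ : G) 1)) ∧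
      Matrix.det (Matrix.of fun (σ τ : T) =>
          ((Nat.card H : ℚ))⁻¹ * cyclicLatticeForm G
            (Submodule.Quotient.mk (hTilde H * MonoidAlgebra.single (σ : G) 1))
            (Submodule.Quotient.mk (hTilde H * MonoidAlgebra.single (τ : G) 1))) =
        (Nat.card H : ℚ) / (Fintype.card G : ℚ) := by
  exact ⟨part1 H T hT1 hT2, part2 H T hT1 hT2⟩

end
end

section
/- Let G be a non-cyclic finite group. Let (·,·) be the ℚ-bilinear form on ℚ[G] determined by (g, g') = δ_{g,g'} for g, g' ∈ G, restricted to the augmentation ideal of ℚ[G]; this restriction is G-invariant and non-degenerate. For each subgroup H ≤ G let d(H) be the determinant of the Gram matrix of the form (1/|H|)·(·,·) evaluated on a ℤ-basis of the H-fixed submodule (I_G)^H of the augmentation ideal I_G ⊆ ℤ[G] (this determinant is independent of the choice of ℤ-basis). Then for every G-relation n, ∏_{H ≤ G} d(H)^{n(H)} = ∏_{H ≤ G} |H|^{−n(H)}. -/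
open scoped BigOperators

noncomputable section

/-- The augmentation ideal I_G of ℤ[G], i.e. the kernel of the augmentation map
ℤ[G] → ℤ, ∑ a_g g ↦ ∑ a_g. -/
def augIdeal (G : Type) [Group G] : Ideal (MonoidAlgebra ℤ G) :=
  RingHom.ker ((MonoidAlgebra.lift ℤ ℤ G 1 : MonoidAlgebra ℤ G →ₐ[ℤ] ℤ) : MonoidAlgebra ℤ G →+* ℤ)

/-- The G-action on a disjoint union of coset spaces with multiplicities. -/
def sigmaCosetSmul {G : Type} [Group G] (m : Subgroup G → ℕ) (g : G) :
    (Σ H : Subgroup G, Fin (m H) × (G ⧸ H)) → (Σ H : Subgroup G, Fin (m H) × (G ⧸ H)) :=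
  fun x => ⟨x.1, x.2.1, g • x.2.2⟩

/-- `n` is a G-relation: ⊕_{n(H)>0} ℚ[G/H]^{n(H)} ≅ ⊕_{n(H)<0} ℚ[G/H]^{-n(H)} as
ℚ[G]-modules. -/
def IsGRelation {G : Type} [Group G] (n : Subgroup G → ℤ) : Prop :=
  ∃ e : ((Σ H : Subgroup G, Fin ((n H).toNat) × (G ⧸ H)) →₀ ℚ) ≃ₗ[ℚ]
        ((Σ H : Subgroup G, Fin ((-n H).toNat) × (G ⧸ H)) →₀ ℚ),
    ∀ (g : G) v, e (Finsupp.mapDomain (sigmaCosetSmul _ g) v) =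
      Finsupp.mapDomain (sigmaCosetSmul _ g) (e v)

/-- The bilinear extension of (g,g') = δ_{g,g'} on ℚ[G]. -/
def deltaForm (G : Type) [Group G] [Fintype G] (x y : MonoidAlgebra ℚ G) : ℚ :=
  ∑ g : G, x.coeff g * y.coeff g

open MulAction
open scoped Matrix

namespace RegAux


variable {G : Type} [Group G] [Fintype G]

omit [Fintype G] in
lemma mk_smul_eq (H : Subgroup G) (k : H) (g : G) :
    (Quotient.mk'' (↑k * g) : orbitRel.Quotient H G) = Quotient.mk'' g := by
  rw [Quotient.eq'', orbitRel_apply]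
  exact ⟨k, rfl⟩

lemma card_fiber (H : Subgroup G) (q : orbitRel.Quotient H G) [Fintype (orbitRel.Quotient H G)]
    [DecidableEq (orbitRel.Quotient H G)] :
    (Finset.univ.filter fun g : G => (Quotient.mk'' g : orbitRel.Quotient H G) = q).card
      = Nat.card H := by
  classical
  rw [Nat.card_eq_fintype_card, ← Fintype.card_coe]
  have hmem : ∀ h : H, (↑h * q.out : G) ∈
      (Finset.univ.filter fun g : G => (Quotient.mk'' g : orbitRel.Quotient H G) = q) := by
    intro h
    simp only [Finset.mem_filter, Finset.mem_univ, true_and, mk_smul_eq, q.out_eq']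
  refine (Fintype.card_congr (Equiv.ofBijective
    (fun h : H => (⟨↑h * q.out, hmem h⟩ : {x // x ∈ _})) ⟨?_, ?_⟩)).symm
  · intro h1 h2 hh
    exact Subtype.ext (mul_right_cancel (Subtype.ext_iff.mp hh : (↑h1 * q.out : G) = ↑h2 * q.out))
  · rintro ⟨g, hg⟩
    simp only [Finset.mem_filter, Finset.mem_univ, true_and] at hg
    have : g ∈ orbit H q.out := by
      rw [← orbitRel_apply, ← Quotient.eq'']
      rw [q.out_eq']; exact hg
    obtain ⟨h, hh⟩ := mem_orbit_iff.mp this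
    exact ⟨h, Subtype.ext hh⟩

lemma sum_mk_eq {R : Type*} [CommRing R] (H : Subgroup G) [Fintype (orbitRel.Quotient H G)]
    [DecidableEq (orbitRel.Quotient H G)]
    (f : orbitRel.Quotient H G → R) :
    ∑ g : G, f (Quotient.mk'' g) = ∑ q : orbitRel.Quotient H G, (Nat.card H : R) * f q := by
  classical
  rw [← Finset.sum_fiberwise Finset.univ (fun g : G => (Quotient.mk'' g : orbitRel.Quotient H G))
    (fun g => f (Quotient.mk'' g))]
  refine Finset.sum_congr rfl fun q _ => ?_
  rw [Finset.sum_congr rfl (fun g hg => by rw [(Finset.mem_filter.mp hg).2]),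
    Finset.sum_const, card_fiber, nsmul_eq_mul]

lemma mem_augIdeal_iff (x : MonoidAlgebra ℤ G) : x ∈ augIdeal G ↔ ∑ g : G, x.coeff g = 0 := by
  rw [augIdeal, RingHom.mem_ker]
  show (MonoidAlgebra.lift ℤ ℤ G) 1 x = 0 ↔ _
  rw [MonoidAlgebra.lift_apply, Finsupp.sum_fintype]
  · simp
  · simp

omit [Fintype G] in
lemma mem_fixed_iff (H : Subgroup G) (x : augIdeal G) :
    x ∈ fixedAddSubgroup H (augIdeal G) ↔
      ∀ h ∈ H, ∀ g : G, (x : MonoidAlgebra ℤ G).coeff (h⁻¹ * g) = (x : MonoidAlgebra ℤ G).coeff g := by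
  show (∀ h ∈ H, (MonoidAlgebra.single h 1 : MonoidAlgebra ℤ G) • x = x) ↔ _
  refine forall₂_congr fun h hh => ?_
  rw [Subtype.ext_iff, Submodule.coe_smul, smul_eq_mul, ← MonoidAlgebra.coeff_inj, Finsupp.ext_iff]
  refine forall_congr' fun g => ?_
  rw [MonoidAlgebra.coeff_single_mul_apply, one_mul]


lemma gram_congr_same {M : Type*} [AddCommGroup M] [Module ℤ M] {ι : Type}
    [Fintype ι] [DecidableEq ι]
    (B : M →ₗ[ℤ] M →ₗ[ℤ] ℚ) (b c : Module.Basis ι ℤ M) :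
    Matrix.det (Matrix.of fun i j => B (c i) (c j)) =
      Matrix.det (Matrix.of fun i j => B (b i) (b j)) := by
  set P : Matrix ι ι ℤ := b.toMatrix ⇑c with hP
  have hc := fun j => (b.sum_toMatrix_smul_self ⇑c j).symm
  have hmat : (Matrix.of fun i j => B (c i) (c j)) =
      (P.map (Int.cast : ℤ → ℚ))ᵀ * ((Matrix.of fun i j => B (b i) (b j)) * P.map Int.cast) := by
    refine Matrix.ext fun i j => ?_
    simp only [Matrix.mul_apply, Matrix.transpose_apply, Matrix.map_apply, Matrix.of_apply]
    rw [hc i, hc j]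
    simp only [map_sum, map_smul, LinearMap.sum_apply, LinearMap.smul_apply, zsmul_eq_mul,
      Finset.mul_sum, Finset.sum_mul, smul_eq_mul]
    rw [Finset.sum_comm]
    refine Finset.sum_congr rfl fun k _ => Finset.sum_congr rfl fun l _ => by ring
  have hdet : ((P.det : ℚ))^2 = 1 := by
    haveI := b.invertibleToMatrix c
    haveI := Matrix.detInvertibleOfInvertible P
    have hu : IsUnit P.det := isUnit_of_invertible _
    rcases Int.isUnit_iff.mp hu with h | h <;> rw [h] <;> norm_num
  rw [hmat, Matrix.det_mul, Matrix.det_mul, Matrix.det_transpose]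
  have h2 : (P.map (Int.cast : ℤ → ℚ)).det = (P.det : ℚ) := ((Int.castRingHom ℚ).map_det P).symm
  rw [h2]
  ring_nf
  rw [hdet, one_mul]

lemma gram_congr {M : Type*} [AddCommGroup M] [Module ℤ M] {ι ι' : Type}
    [Fintype ι] [DecidableEq ι] [Fintype ι'] [DecidableEq ι']
    (B : M →ₗ[ℤ] M →ₗ[ℤ] ℚ) (b : Module.Basis ι ℤ M) (c : Module.Basis ι' ℤ M) :
    Matrix.det (Matrix.of fun i j => B (c i) (c j)) =
      Matrix.det (Matrix.of fun i j => B (b i) (b j)) := by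
  let e : ι' ≃ ι := c.indexEquiv b
  have h1 : (Matrix.of fun i j : ι' => B (c i) (c j))
      = (Matrix.of fun i j : ι => B ((c.reindex e) i) ((c.reindex e) j)).submatrix e e := by
    refine Matrix.ext fun i j => ?_
    simp [Module.Basis.reindex_apply]
  rw [h1, Matrix.det_submatrix_equiv_self, gram_congr_same B b (c.reindex e)]

section OneH

variable (H : Subgroup G) [Fintype (orbitRel.Quotient H G)]
  [DecidableEq (orbitRel.Quotient H G)]

abbrev q0 : orbitRel.Quotient H G := Quotient.mk'' 1

abbrev idx := {q : orbitRel.Quotient H G // q ≠ q0 H}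

def wfun (v : idx H → ℤ) : orbitRel.Quotient H G → ℤ :=
  fun q => if h : q = q0 H then -∑ i : idx H, v i else v ⟨q, h⟩

lemma wfun_ne (v : idx H → ℤ) (i : idx H) : wfun H v ↑i = v i := by
  rw [wfun, dif_neg i.2]

lemma sum_wfun (v : idx H → ℤ) : ∑ q : orbitRel.Quotient H G, wfun H v q = 0 := by
  rw [Fintype.sum_eq_add_sum_compl (q0 H)]
  have h1 : wfun H v (q0 H) = -∑ i : idx H, v i := dif_pos rfl
  have h2 : ∑ q ∈ ({q0 H}ᶜ : Finset _), wfun H v q = ∑ i : idx H, v i := by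
    rw [Finset.sum_subtype (p := fun q => q ≠ q0 H) ({q0 H}ᶜ) (fun q => by simp) (wfun H v)]
    exact Finset.sum_congr rfl fun i _ => by rw [wfun_ne]
  rw [h1, h2, neg_add_cancel]

def elt (v : idx H → ℤ) : MonoidAlgebra ℤ G :=
  MonoidAlgebra.ofCoeff (Finsupp.equivFunOnFinite.symm (fun g : G => wfun H v (Quotient.mk'' g)))

lemma elt_apply (v : idx H → ℤ) (g : G) : (elt H v).coeff g = wfun H v (Quotient.mk'' g) := rfl

lemma elt_mem_aug (v : idx H → ℤ) : elt H v ∈ augIdeal G := by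
  rw [mem_augIdeal_iff]
  simp only [elt_apply]
  rw [sum_mk_eq H (fun q => wfun H v q), ← Finset.mul_sum, sum_wfun, mul_zero]

lemma elt_mem_fixed (v : idx H → ℤ) :
    (⟨elt H v, elt_mem_aug H v⟩ : augIdeal G) ∈ fixedAddSubgroup H (augIdeal G) := by
  rw [mem_fixed_iff]
  intro h hh g
  show (elt H v).coeff (h⁻¹ * g) = (elt H v).coeff g
  rw [elt_apply, elt_apply]
  congr 1
  exact mk_smul_eq H (⟨h, hh⟩ : H)⁻¹ g

lemma fixed_const (x : augIdeal G) (hx : x ∈ fixedAddSubgroup H (augIdeal G)) (g : G) :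
    (x : MonoidAlgebra ℤ G).coeff g
      = (x : MonoidAlgebra ℤ G).coeff ((Quotient.mk'' g : orbitRel.Quotient H G)).out := by
  rw [mem_fixed_iff] at hx
  set q : orbitRel.Quotient H G := Quotient.mk'' g with hq
  have : g ∈ orbit H q.out := by
    rw [← orbitRel_apply, ← Quotient.eq'', q.out_eq']
  obtain ⟨k, hk⟩ := mem_orbit_iff.mp this
  have := hx ↑k k.2 g
  rw [← this]
  congr 1
  rw [← hk]
  show ((↑k)⁻¹ * (↑k * q.out) : G) = q.out
  group

lemma sum_out_eq_zero (x : augIdeal G) (hx : x ∈ fixedAddSubgroup H (augIdeal G)) :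
    ∑ q : orbitRel.Quotient H G, (x : MonoidAlgebra ℤ G).coeff q.out = 0 := by
  have h0 : ∑ g : G, (x : MonoidAlgebra ℤ G).coeff g = 0 := (mem_augIdeal_iff _).mp x.2
  rw [Finset.sum_congr rfl (fun g _ => fixed_const H x hx g)] at h0
  rw [sum_mk_eq H (fun q => (x : MonoidAlgebra ℤ G).coeff q.out)] at h0
  rw [← Finset.mul_sum] at h0
  have hH : (Nat.card H : ℤ) ≠ 0 := Int.natCast_ne_zero.mpr Nat.card_pos.ne'
  exact (mul_eq_zero.mp h0).resolve_left hH

def fixedEquiv : fixedAddSubgroup H (augIdeal G) ≃+ (idx H → ℤ) where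
  toFun x := fun i => ((x : augIdeal G) : MonoidAlgebra ℤ G).coeff (i.1.out)
  invFun v := ⟨⟨elt H v, elt_mem_aug H v⟩, elt_mem_fixed H v⟩
  left_inv := by
    rintro ⟨x, hx⟩
    ext g
    show (elt H _).coeff g = (x : MonoidAlgebra ℤ G).coeff g
    rw [elt_apply, wfun]
    split_ifs with h
    · have := sum_out_eq_zero H x hx
      rw [Fintype.sum_eq_add_sum_compl (q0 H)] at this
      have h2 : ∑ q ∈ ({q0 H}ᶜ : Finset _), (x : MonoidAlgebra ℤ G).coeff q.out
          = ∑ i : idx H, (x : MonoidAlgebra ℤ G).coeff i.1.out := by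
        rw [Finset.sum_subtype (p := fun q => q ≠ q0 H) ({q0 H}ᶜ) (fun q => by simp)
          (fun q => (x : MonoidAlgebra ℤ G).coeff q.out)]
      rw [h2] at this
      have h3 : (x : MonoidAlgebra ℤ G).coeff ((q0 H).out) = -∑ i : idx H, (x : MonoidAlgebra ℤ G).coeff i.1.out := by
        linarith
      rw [← h3, fixed_const H x hx g, h]
    · exact (fixed_const H x hx g).symm
  right_inv := by
    intro v
    funext i
    show (elt H v).coeff (i.1.out) = v i
    rw [elt_apply, i.1.out_eq', wfun_ne]
  map_add' := by
    intro x y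
    funext i
    show ((x + y : fixedAddSubgroup H (augIdeal G)) : augIdeal G).1.coeff i.1.out = _
    rfl


def fixedBasis : Module.Basis (idx H) ℤ (fixedAddSubgroup H (augIdeal G)) :=
  Module.Basis.ofEquivFun (fixedEquiv H).toIntLinearEquiv

set_option synthInstance.maxHeartbeats 1000000 in
lemma fixedBasis_apply (i : idx H) :
    ((fixedBasis H i : augIdeal G) : MonoidAlgebra ℤ G) = elt H (Pi.single i 1) := by
  rw [fixedBasis, Module.Basis.coe_ofEquivFun]
  rfl

lemma wfun_single (i : idx H) (q : orbitRel.Quotient H G) :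
    wfun H (Pi.single i 1) q = if q = q0 H then -1 else if q = ↑i then 1 else 0 := by
  rw [wfun]
  split_ifs with h1 h2
  · simp
  · rw [Pi.single_apply, if_pos (Subtype.ext h2)]
  · rw [Pi.single_apply, if_neg (fun hc => h2 (congrArg Subtype.val hc))]

lemma elt_single_coe (i : idx H) (g : G) :
    ((elt H (Pi.single i 1)).coeff g : ℚ) =
      (if (Quotient.mk'' g : orbitRel.Quotient H G) = q0 H then -1
        else if (Quotient.mk'' g : orbitRel.Quotient H G) = ↑i then 1 else 0) := by
  rw [elt_apply, wfun_single]
  split_ifs <;> norm_num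

lemma chi_eq (i : idx H) (q : orbitRel.Quotient H G) :
    (if q = q0 H then (-1 : ℚ) else if q = ↑i then 1 else 0)
      = (if q = ↑i then (1:ℚ) else 0) - (if q = q0 H then 1 else 0) := by
  by_cases h0 : q = q0 H
  · have hni : ¬ q = ↑i := fun hc => i.2 (by rw [← hc, h0])
    rw [if_pos h0, if_pos h0, if_neg hni]
    norm_num
  · rw [if_neg h0, if_neg h0, sub_zero]

lemma sum_ind (a b : orbitRel.Quotient H G) :
    ∑ q : orbitRel.Quotient H G,
      (if q = a then (1:ℚ) else 0) * (if q = b then 1 else 0) = if a = b then 1 else 0 := by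
  simp only [ite_mul, one_mul, zero_mul]
  rw [Finset.sum_ite_eq' Finset.univ a (fun q => if q = b then (1:ℚ) else 0)]
  simp

lemma sum_chi_mul (i j : idx H) :
    ∑ q : orbitRel.Quotient H G,
      (if q = q0 H then (-1:ℚ) else if q = ↑i then 1 else 0) *
      (if q = q0 H then (-1:ℚ) else if q = ↑j then 1 else 0)
    = (if i = j then 1 else 0) + 1 := by
  have expand : ∀ q : orbitRel.Quotient H G,
      (if q = q0 H then (-1:ℚ) else if q = ↑i then 1 else 0) *
      (if q = q0 H then (-1:ℚ) else if q = ↑j then 1 else 0)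
      = ((if q = ↑i then (1:ℚ) else 0) * (if q = ↑j then 1 else 0))
        - ((if q = ↑i then (1:ℚ) else 0) * (if q = q0 H then 1 else 0))
        - ((if q = q0 H then (1:ℚ) else 0) * (if q = ↑j then 1 else 0))
        + ((if q = q0 H then (1:ℚ) else 0) * (if q = q0 H then 1 else 0)) := by
    intro q
    rw [chi_eq H i q, chi_eq H j q]
    ring
  rw [Finset.sum_congr rfl fun q _ => expand q]
  simp only [Finset.sum_add_distrib, Finset.sum_sub_distrib]
  rw [sum_ind, sum_ind, sum_ind, sum_ind]
  have h1 : ((↑i : orbitRel.Quotient H G) = ↑j) = (i = j) := by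
    simp [Subtype.ext_iff]
  rw [if_neg (fun hc : (↑i : orbitRel.Quotient H G) = q0 H => i.2 hc),
    if_neg (fun hc : q0 H = (↑j : orbitRel.Quotient H G) => j.2 hc.symm), if_pos rfl]
  by_cases hij : i = j
  · rw [if_pos (by rw [hij]), if_pos hij]; ring
  · rw [if_neg (fun hc => hij (Subtype.ext hc)), if_neg hij]; ring

lemma gram_entry (i j : idx H) :
    ∑ g : G, ((elt H (Pi.single i 1)).coeff g : ℚ) * ((elt H (Pi.single j 1)).coeff g : ℚ)
      = (Nat.card H : ℚ) * ((if i = j then 1 else 0) + 1) := by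
  rw [Finset.sum_congr rfl fun g _ => by rw [elt_single_coe H i g, elt_single_coe H j g]]
  rw [sum_mk_eq (R := ℚ) H (fun q =>
    (if q = q0 H then (-1:ℚ) else if q = ↑i then 1 else 0) *
    (if q = q0 H then (-1:ℚ) else if q = ↑j then 1 else 0))]
  rw [← Finset.mul_sum, sum_chi_mul]

lemma card_Q_mul :
    (Fintype.card (orbitRel.Quotient H G) : ℚ) * (Nat.card H : ℚ) = (Nat.card G : ℚ) := by
  have := sum_mk_eq (R := ℚ) H (fun _ => 1)
  simp only [Finset.sum_const, Finset.card_univ, nsmul_eq_mul, mul_one] at this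
  rw [Nat.card_eq_fintype_card (α := G)]
  exact this.symm

lemma det_gram :
    Matrix.det (Matrix.of fun i j : idx H => (Nat.card H : ℚ)⁻¹ *
        (∑ g : G, ((elt H (Pi.single i 1)).coeff g : ℚ) * ((elt H (Pi.single j 1)).coeff g : ℚ)))
      = (Fintype.card (orbitRel.Quotient H G) : ℚ) := by
  have hH : (Nat.card H : ℚ) ≠ 0 := Nat.cast_ne_zero.mpr Nat.card_pos.ne'
  have hmat : (Matrix.of fun i j : idx H => (Nat.card H : ℚ)⁻¹ *
      (∑ g : G, ((elt H (Pi.single i 1)).coeff g : ℚ) * ((elt H (Pi.single j 1)).coeff g : ℚ)))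
      = 1 + Matrix.replicateCol Unit (fun _ => (1:ℚ)) * Matrix.replicateRow Unit (fun _ => (1:ℚ)) := by
    refine Matrix.ext fun i j => ?_
    rw [Matrix.of_apply, gram_entry, inv_mul_cancel_left₀ hH]
    simp only [Matrix.add_apply, Matrix.one_apply, Matrix.mul_apply, Matrix.replicateCol_apply,
      Matrix.replicateRow_apply, Finset.univ_unique, Finset.sum_const, Finset.card_singleton,
      one_smul, mul_one]
  rw [hmat, Matrix.det_one_add_replicateCol_mul_replicateRow]
  have hcard : Fintype.card (idx H) = Fintype.card (orbitRel.Quotient H G) - 1 := by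
    have h := Fintype.card_subtype_compl (fun q : orbitRel.Quotient H G => q = q0 H)
    rw [Fintype.card_subtype_eq] at h
    convert h using 2
  have hpos : 1 ≤ Fintype.card (orbitRel.Quotient H G) :=
    Fintype.card_pos_iff.mpr ⟨q0 H⟩
  rw [dotProduct, Finset.sum_const, Finset.card_univ, nsmul_eq_mul, mul_one, hcard]
  rw [Nat.cast_sub hpos]
  push_cast
  ring

def BH : (fixedAddSubgroup H (augIdeal G)) →ₗ[ℤ] (fixedAddSubgroup H (augIdeal G)) →ₗ[ℤ] ℚ :=
  AddMonoidHom.toIntLinearMap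
  { toFun := fun x => AddMonoidHom.toIntLinearMap
      { toFun := fun y => (Nat.card H : ℚ)⁻¹ *
          ∑ g : G, (((x : augIdeal G) : MonoidAlgebra ℤ G).coeff g : ℚ) *
            (((y : augIdeal G) : MonoidAlgebra ℤ G).coeff g : ℚ)
        map_zero' := by simp
        map_add' := by
          intro y z
          push_cast [AddSubgroup.coe_add, Submodule.coe_add, MonoidAlgebra.coeff_add, Finsupp.add_apply]
          rw [← mul_add, ← Finset.sum_add_distrib]
          congr 1
          exact Finset.sum_congr rfl fun g _ => by
            push_cast; ring }
    map_zero' := by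
      refine LinearMap.ext fun y => ?_
      simp
    map_add' := by
      intro x z
      refine LinearMap.ext fun y => ?_
      show (Nat.card H : ℚ)⁻¹ * _ = (Nat.card H : ℚ)⁻¹ * _ + (Nat.card H : ℚ)⁻¹ * _
      push_cast [AddSubgroup.coe_add, Submodule.coe_add, MonoidAlgebra.coeff_add, Finsupp.add_apply]
      rw [← mul_add, ← Finset.sum_add_distrib]
      congr 1
      exact Finset.sum_congr rfl fun g _ => by
        push_cast; ring }

lemma BH_apply (x y : fixedAddSubgroup H (augIdeal G)) :
    BH H x y = (Nat.card H : ℚ)⁻¹ *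
      ∑ g : G, (((x : augIdeal G) : MonoidAlgebra ℤ G).coeff g : ℚ) *
        (((y : augIdeal G) : MonoidAlgebra ℤ G).coeff g : ℚ) := rfl

lemma dH_value (ι : Type) [Fintype ι] [DecidableEq ι]
    (b : Module.Basis ι ℤ (fixedAddSubgroup H (augIdeal G))) :
    Matrix.det (Matrix.of fun i j =>
        ((Nat.card H : ℚ))⁻¹ *
          deltaForm G (intToRat G ((b i : augIdeal G) : MonoidAlgebra ℤ G))
            (intToRat G ((b j : augIdeal G) : MonoidAlgebra ℤ G)))
      = (Nat.card G : ℚ) / (Nat.card H : ℚ) := by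
  have hform : ∀ x y : fixedAddSubgroup H (augIdeal G),
      ((Nat.card H : ℚ))⁻¹ * deltaForm G (intToRat G ((x : augIdeal G) : MonoidAlgebra ℤ G))
          (intToRat G ((y : augIdeal G) : MonoidAlgebra ℤ G)) = BH H x y := by
    intro x y
    rw [BH_apply]
    simp only [deltaForm, intToRat, MonoidAlgebra.coeff_ofCoeff, Finsupp.mapRange_apply]
  have hM : (Matrix.of fun i j =>
      ((Nat.card H : ℚ))⁻¹ *
        deltaForm G (intToRat G ((b i : augIdeal G) : MonoidAlgebra ℤ G))
          (intToRat G ((b j : augIdeal G) : MonoidAlgebra ℤ G)))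
      = Matrix.of fun i j => BH H (b i) (b j) :=
    Matrix.ext fun i j => hform _ _
  have hM2 : (Matrix.of fun i j : idx H => BH H (fixedBasis H i) (fixedBasis H j))
      = Matrix.of fun i j : idx H => (Nat.card H : ℚ)⁻¹ *
          (∑ g : G, ((elt H (Pi.single i 1)).coeff g : ℚ) * ((elt H (Pi.single j 1)).coeff g : ℚ)) :=
    Matrix.ext fun i j => by
      rw [Matrix.of_apply, BH_apply, fixedBasis_apply, fixedBasis_apply, Matrix.of_apply]
  have hH : (Nat.card H : ℚ) ≠ 0 := Nat.cast_ne_zero.mpr Nat.card_pos.ne'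
  rw [hM, gram_congr (BH H) (fixedBasis H) b, hM2, det_gram, eq_div_iff hH]
  exact card_Q_mul H

end OneH

end RegAux

namespace RegAuxB


lemma trace_lmapDomain {α : Type} [Fintype α] (σ : α → α) :
    LinearMap.trace ℚ (α →₀ ℚ) (Finsupp.lmapDomain ℚ ℚ σ)
      = (Nat.card {a : α // σ a = a} : ℚ) := by
  classical
  rw [LinearMap.trace_eq_matrix_trace ℚ Finsupp.basisSingleOne, Matrix.trace]
  have hdiag : ∀ a : α,
      (LinearMap.toMatrix Finsupp.basisSingleOne Finsupp.basisSingleOne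
        (Finsupp.lmapDomain ℚ ℚ σ)).diag a = if σ a = a then (1:ℚ) else 0 := by
    intro a
    rw [Matrix.diag_apply, LinearMap.toMatrix_apply]
    simp [Finsupp.lmapDomain_apply, Finsupp.mapDomain_single, Finsupp.single_apply]
  rw [Finset.sum_congr rfl fun a _ => hdiag a, Finset.sum_boole,
    Nat.card_eq_fintype_card, Fintype.card_subtype]

variable {G : Type} [Group G] [Fintype G]

lemma card_fixed_sigma (m : Subgroup G → ℕ) (g : G) :
    Nat.card {x : Σ H : Subgroup G, Fin (m H) × (G ⧸ H) // sigmaCosetSmul m g x = x}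
      = ∑ᶠ H : Subgroup G, m H * Nat.card {c : G ⧸ H // g • c = c} := by
  classical
  haveI : Fintype (Subgroup G) := Fintype.ofFinite _
  haveI : ∀ H : Subgroup G, Fintype (G ⧸ H) := fun H => Fintype.ofFinite _
  have eqv : {x : Σ H : Subgroup G, Fin (m H) × (G ⧸ H) // sigmaCosetSmul m g x = x}
      ≃ Σ H : Subgroup G, Fin (m H) × {c : G ⧸ H // g • c = c} :=
    { toFun := fun p => ⟨p.1.1, p.1.2.1, ⟨p.1.2.2, by
        have h := p.2
        unfold sigmaCosetSmul at h
        have h2 := (Sigma.mk.inj_iff.mp h).2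
        have h3 := eq_of_heq h2
        exact congrArg Prod.snd h3⟩⟩
      invFun := fun t => ⟨⟨t.1, t.2.1, t.2.2.1⟩, by
        unfold sigmaCosetSmul
        simp [t.2.2.2]⟩
      left_inv := fun p => rfl
      right_inv := fun t => rfl }
  rw [Nat.card_congr eqv, Nat.card_eq_fintype_card, finsum_eq_sum_of_fintype]
  rw [Fintype.card_sigma]
  refine Finset.sum_congr rfl fun H _ => ?_
  rw [Fintype.card_prod, Fintype.card_fin, Nat.card_eq_fintype_card]

lemma burnside_coset (H : Subgroup G) :
    ∑ g : G, Nat.card {c : G ⧸ H // g • c = c} = Nat.card (G ⧸ H) * Nat.card H := by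
  classical
  haveI : Fintype (G ⧸ H) := Fintype.ofFinite _
  haveI : ∀ g : G, Fintype (fixedBy (G ⧸ H) g) := fun g => Fintype.ofFinite _
  haveI : Fintype (Quotient (orbitRel G (G ⧸ H))) := Fintype.ofFinite _
  have hb := MulAction.sum_card_fixedBy_eq_card_orbits_mul_card_group G (G ⧸ H)
  have h1 : ∀ g : G, Nat.card {c : G ⧸ H // g • c = c} = Fintype.card (fixedBy (G ⧸ H) g) := by
    intro g
    rw [Nat.card_eq_fintype_card]
    exact Fintype.card_congr (Equiv.subtypeEquivRight (by intro c; simp [MulAction.mem_fixedBy]))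
  have h2 : Fintype.card (Quotient (orbitRel G (G ⧸ H))) = 1 := by
    rw [Fintype.card_eq_one_iff]
    refine ⟨Quotient.mk'' (QuotientGroup.mk 1), fun y => ?_⟩
    induction y using Quotient.inductionOn' with
    | h c =>
      rw [Quotient.eq'', orbitRel_apply]
      obtain ⟨g, hg⟩ := MulAction.exists_smul_eq G (QuotientGroup.mk (1:G) : G ⧸ H) c
      exact ⟨g, hg⟩
  rw [Finset.sum_congr rfl fun g _ => h1 g, hb, h2, one_mul]
  -- card (G ⧸ H) * card H = card G
  rw [← Nat.card_eq_fintype_card (α := G)]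
  exact Subgroup.card_eq_card_quotient_mul_card_subgroup H

lemma trace_T (m : Subgroup G → ℕ) [Fintype ((Σ H : Subgroup G, Fin (m H) × (G ⧸ H)))] :
    LinearMap.trace ℚ ((Σ H : Subgroup G, Fin (m H) × (G ⧸ H)) →₀ ℚ)
        (∑ g : G, Finsupp.lmapDomain ℚ ℚ (sigmaCosetSmul m g))
      = (∑ᶠ H : Subgroup G, (m H : ℚ)) * (Nat.card G : ℚ) := by
  classical
  haveI : Fintype (Subgroup G) := Fintype.ofFinite _
  rw [map_sum, Finset.sum_congr rfl fun g _ => trace_lmapDomain (sigmaCosetSmul m g)]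
  have hfix : ∀ g : G, ((Nat.card {x : Σ H : Subgroup G, Fin (m H) × (G ⧸ H) //
      sigmaCosetSmul m g x = x}) : ℚ)
      = ∑ H : Subgroup G, (m H : ℚ) * (Nat.card {c : G ⧸ H // g • c = c} : ℚ) := by
    intro g
    rw [card_fixed_sigma m g, finsum_eq_sum_of_fintype]
    push_cast
    rfl
  rw [Finset.sum_congr rfl fun g _ => hfix g, Finset.sum_comm]
  have hB : ∀ H : Subgroup G, ∑ g : G, ((Nat.card {c : G ⧸ H // g • c = c}) : ℚ)
      = (Nat.card G : ℚ) := by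
    intro H
    rw [← Nat.cast_sum, burnside_coset, ← Subgroup.card_eq_card_quotient_mul_card_subgroup H]
  rw [Finset.sum_congr rfl fun H _ => by rw [← Finset.mul_sum, hB H]]
  rw [← Finset.sum_mul, finsum_eq_sum_of_fintype]

set_option synthInstance.maxHeartbeats 1000000 in
lemma sum_m_eq (m1 m2 : Subgroup G → ℕ)
    (e : ((Σ H : Subgroup G, Fin (m1 H) × (G ⧸ H)) →₀ ℚ) ≃ₗ[ℚ]
         ((Σ H : Subgroup G, Fin (m2 H) × (G ⧸ H)) →₀ ℚ))
    (he : ∀ (g : G) v, e (Finsupp.mapDomain (sigmaCosetSmul m1 g) v) =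
      Finsupp.mapDomain (sigmaCosetSmul m2 g) (e v)) :
    ∑ᶠ H : Subgroup G, (m1 H : ℚ) = ∑ᶠ H : Subgroup G, (m2 H : ℚ) := by
  classical
  haveI : Fintype (Subgroup G) := Fintype.ofFinite _
  haveI : ∀ H : Subgroup G, Fintype (G ⧸ H) := fun H => Fintype.ofFinite _
  haveI F1 : Fintype ((Σ H : Subgroup G, Fin (m1 H) × (G ⧸ H))) := inferInstance
  haveI F2 : Fintype ((Σ H : Subgroup G, Fin (m2 H) × (G ⧸ H))) := inferInstance
  have hconj : e.conj (∑ g : G, Finsupp.lmapDomain ℚ ℚ (sigmaCosetSmul m1 g))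
      = ∑ g : G, Finsupp.lmapDomain ℚ ℚ (sigmaCosetSmul m2 g) := by
    rw [map_sum]
    refine Finset.sum_congr rfl fun g _ => ?_
    refine LinearMap.ext fun v => ?_
    rw [LinearEquiv.conj_apply]
    simp only [LinearMap.coe_comp, Function.comp_apply, LinearEquiv.coe_coe,
      Finsupp.lmapDomain_apply]
    rw [he g (e.symm v), LinearEquiv.apply_symm_apply]
  have htr := LinearMap.trace_conj' (∑ g : G, Finsupp.lmapDomain ℚ ℚ (sigmaCosetSmul m1 g)) e
  rw [hconj] at htr
  rw [trace_T m1, trace_T m2] at htr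
  have hG : (Nat.card G : ℚ) ≠ 0 := Nat.cast_ne_zero.mpr Nat.card_pos.ne'
  exact (mul_left_injective₀ hG htr).symm ▸ rfl

lemma sum_n_zero (n : Subgroup G → ℤ) (hn : IsGRelation n) :
    ∑ᶠ H : Subgroup G, n H = 0 := by
  classical
  haveI : Fintype (Subgroup G) := Fintype.ofFinite _
  obtain ⟨e, he⟩ := hn
  have h := sum_m_eq (fun H => (n H).toNat) (fun H => (-n H).toNat) e he
  rw [finsum_eq_sum_of_fintype, finsum_eq_sum_of_fintype] at h
  rw [← Nat.cast_sum, ← Nat.cast_sum, Nat.cast_inj] at h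
  rw [finsum_eq_sum_of_fintype]
  have : ∀ H : Subgroup G, n H = ((n H).toNat : ℤ) - ((-n H).toNat : ℤ) :=
    fun H => (Int.toNat_sub_toNat_neg (n H)).symm
  rw [Finset.sum_congr rfl fun H _ => this H, Finset.sum_sub_distrib]
  rw [← Nat.cast_sum, ← Nat.cast_sum, h, sub_self]

end RegAuxB

lemma prod_zpow_aux {ι : Type*} (a : ℚ) (ha : a ≠ 0) (s : Finset ι) (f : ι → ℤ) :
    ∏ i ∈ s, a ^ f i = a ^ (∑ i ∈ s, f i) := by
  induction s using Finset.cons_induction with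
  | empty => simp
  | cons i s hi ih => rw [Finset.prod_cons, Finset.sum_cons, ih, zpow_add₀ ha]

/-- Proposition 4.2: for a non-cyclic finite group `G` and any `G`-relation `n`, the regulator
constant of the augmentation ideal `I_G`, computed via Gram determinants of the form
`δ_{g,g'}` on the `H`-fixed sublattices, equals `∏_H |H|^{−n(H)}`. -/
theorem regulator_constant_of_augmentation_ideal
    (G : Type) [Group G] [Fintype G] (hG : ¬ IsCyclic G)
    (d : Subgroup G → ℚ)
    (hd : ∀ H : Subgroup G, ∃ (ι : Type) (_ : Fintype ι) (_ : DecidableEq ι)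
      (b : Module.Basis ι ℤ (fixedAddSubgroup H (augIdeal G))),
      d H = Matrix.det (Matrix.of fun i j =>
        ((Nat.card H : ℚ))⁻¹ *
          deltaForm G (intToRat G ((b i : augIdeal G) : MonoidAlgebra ℤ G))
            (intToRat G ((b j : augIdeal G) : MonoidAlgebra ℤ G))))
    (n : Subgroup G → ℤ) (hn : IsGRelation n) :
    ∏ᶠ H : Subgroup G, d H ^ (n H) = ∏ᶠ H : Subgroup G, ((Nat.card H : ℚ)) ^ (-(n H)) := by
  classical
  haveI : Fintype (Subgroup G) := Fintype.ofFinite _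
  have hd' : ∀ H : Subgroup G, d H = (Nat.card G : ℚ) / (Nat.card H : ℚ) := by
    intro H
    obtain ⟨ι, _, _, b, hb⟩ := hd H
    haveI : Fintype (orbitRel.Quotient H G) := Fintype.ofFinite _
    haveI : DecidableEq (orbitRel.Quotient H G) := Classical.decEq _
    rw [hb]
    exact RegAux.dH_value H ι b
  have hsum := RegAuxB.sum_n_zero n hn
  rw [finsum_eq_sum_of_fintype] at hsum
  rw [finprod_eq_prod_of_fintype, finprod_eq_prod_of_fintype]
  have hG : (Nat.card G : ℚ) ≠ 0 := Nat.cast_ne_zero.mpr Nat.card_pos.ne'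
  have step : ∀ H : Subgroup G,
      d H ^ (n H) = (Nat.card G : ℚ) ^ (n H) * (Nat.card H : ℚ) ^ (-(n H)) := by
    intro H
    rw [hd' H, div_zpow, zpow_neg, div_eq_mul_inv]
  rw [Finset.prod_congr rfl fun H _ => step H, Finset.prod_mul_distrib]
  rw [prod_zpow_aux _ hG, hsum, zpow_zero, one_mul]


end
end

section
/- Every finite non-cyclic group G has a subquotient isomorphic either to (ℤ/lℤ) × (ℤ/lℤ) for some prime l, or to a non-abelian group of order p·l for some pair of distinct primes p and l; that is, there exist a subgroup H ≤ G and a normal subgroup N of H such that the quotient H/N is of one of these two forms. -/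
open Subgroup

/-- The "good quotient" property. -/
def GoodQuot (Q : Type*) [Group Q] : Prop :=
  (∃ l : ℕ, l.Prime ∧ Nonempty (Q ≃* Multiplicative (ZMod l × ZMod l))) ∨
  (∃ p l : ℕ, p.Prime ∧ l.Prime ∧ p ≠ l ∧ Nat.card Q = p * l ∧ ∃ a b : Q, a * b ≠ b * a)

lemma goodQuot_congr {Q R : Type*} [Group Q] [Group R] (e : Q ≃* R) (h : GoodQuot Q) :
    GoodQuot R := by
  rcases h with ⟨l, hl, ⟨f⟩⟩ | ⟨p, l, hp, hl, hpl, hcard, a, b, hab⟩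
  · exact Or.inl ⟨l, hl, ⟨e.symm.trans f⟩⟩
  · refine Or.inr ⟨p, l, hp, hl, hpl, ?_, e a, e b, ?_⟩
    · rw [← hcard]; exact Nat.card_congr e.symm.toEquiv
    · intro h
      apply hab
      have := congrArg e.symm h
      simpa using this

def HasSQ (G : Type*) [Group G] : Prop :=
  ∃ (H : Subgroup G) (N : Subgroup H) (_ : N.Normal), GoodQuot (H ⧸ N)

lemma hasSQ_of_subgroup {G : Type*} [Group G] (K : Subgroup G) (h : HasSQ K) : HasSQ G := by
  obtain ⟨H, N, hN, hg⟩ := h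
  haveI := hN
  let e : H ≃* H.map K.subtype := H.equivMapOfInjective K.subtype K.subtype_injective
  refine ⟨H.map K.subtype, N.map e.toMonoidHom, hN.map e.toMonoidHom e.surjective, ?_⟩
  haveI := hN.map e.toMonoidHom e.surjective
  exact goodQuot_congr (QuotientGroup.congr N (N.map e.toMonoidHom) e rfl) hg

lemma hasSQ_of_quotient {G : Type*} [Group G] (K : Subgroup G) (hK : K.Normal)
    (h : HasSQ (G ⧸ K)) : HasSQ G := by
  haveI := hK
  obtain ⟨H, N, hN, hg⟩ := h
  haveI := hN
  let H' : Subgroup G := H.comap (QuotientGroup.mk' K)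
  let ψ : H' →* H :=
    ((QuotientGroup.mk' K).domRestrict H').codRestrict H (fun x => x.2)
  have hψ : Function.Surjective ψ := by
    rintro ⟨y, hy⟩
    obtain ⟨x, hx⟩ := QuotientGroup.mk'_surjective K y
    refine ⟨⟨x, ?_⟩, Subtype.ext hx⟩
    show QuotientGroup.mk' K x ∈ H
    rw [show QuotientGroup.mk' K x = y from hx]
    exact hy
  let φ : H' →* H ⧸ N := (QuotientGroup.mk' N).comp ψ
  have hφ : Function.Surjective φ :=
    (QuotientGroup.mk'_surjective N).comp hψ
  refine ⟨H', φ.ker, inferInstance, ?_⟩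
  exact goodQuot_congr (QuotientGroup.quotientKerEquivOfSurjective φ hφ).symm hg

lemma comm_of_isCyclic {G : Type*} [Group G] (h : IsCyclic G) (x y : G) : x * y = y * x := by
  obtain ⟨g, hg⟩ := h
  obtain ⟨m, hm⟩ := hg x
  obtain ⟨n, hn⟩ := hg y
  subst hm; subst hn
  rw [← zpow_add, ← zpow_add, add_comm]


def torsionIn {G : Type*} [Group G] (K : Subgroup G)
    (hcomm : ∀ x y, x ∈ K → y ∈ K → x * y = y * x) (u : ℕ) : Subgroup G where
  carrier := {x | x ∈ K ∧ x ^ u = 1}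
  one_mem' := ⟨K.one_mem, one_pow u⟩
  mul_mem' := by
    rintro x y ⟨hxK, hx⟩ ⟨hyK, hy⟩
    refine ⟨K.mul_mem hxK hyK, ?_⟩
    rw [Commute.mul_pow (hcomm x y hxK hyK), hx, hy, one_mul]
  inv_mem' := by
    rintro x ⟨hxK, hx⟩
    exact ⟨K.inv_mem hxK, by rw [inv_pow, hx, inv_one]⟩

lemma torsionIn_mem {G : Type*} [Group G] {K : Subgroup G}
    {hcomm : ∀ x y, x ∈ K → y ∈ K → x * y = y * x} {u : ℕ} {x : G} :
    x ∈ torsionIn K hcomm u ↔ x ∈ K ∧ x ^ u = 1 := Iff.rfl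

lemma torsionIn_normal {G : Type*} [Group G] {K : Subgroup G} (hK : K.Normal)
    (hcomm : ∀ x y, x ∈ K → y ∈ K → x * y = y * x) (u : ℕ) :
    (torsionIn K hcomm u).Normal := by
  constructor
  rintro x ⟨hxK, hx⟩ g
  refine ⟨hK.conj_mem x hxK g, ?_⟩
  have h1 : (g * x * g⁻¹) ^ u = g * x ^ u * g⁻¹ := by
    have := map_pow (MulAut.conj g).toMonoidHom x u
    simpa [MulAut.conj_apply] using this.symm
  rw [h1, hx, mul_one, mul_inv_cancel]

lemma binom_int (x : ℤ) : ∀ q : ℕ, ∃ c : ℤ, (1 + x) ^ q = 1 + q * x + x ^ 2 * c := by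
  intro q
  induction q with
  | zero => exact ⟨0, by ring⟩
  | succ i ih =>
    obtain ⟨c, hc⟩ := ih
    refine ⟨c + i + x * c, ?_⟩
    rw [pow_succ, hc]
    push_cast
    ring

lemma nt_lemma {l : ℤ} (hl : Prime l) {v : ℕ} (hv : 2 ≤ v) {s : ℤ} {q : ℕ}
    (h1 : l ^ (v - 1) ∣ s - 1) (h2 : l ^ v ∣ s ^ q - 1) (hq : ¬ l ∣ (q : ℤ)) :
    l ^ v ∣ s - 1 := by
  obtain ⟨a, ha⟩ := h1
  have hs : s = 1 + l ^ (v - 1) * a := by linarith [ha]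
  obtain ⟨c, hc⟩ := binom_int (l ^ (v - 1) * a) q
  have hx2 : l ^ v ∣ (l ^ (v - 1) * a) ^ 2 * c := by
    have h2v : l ^ v ∣ l ^ (2 * (v - 1)) := pow_dvd_pow l (by omega)
    have : (l ^ (v - 1) * a) ^ 2 = l ^ (2 * (v - 1)) * a ^ 2 := by
      rw [mul_pow, ← pow_mul, mul_comm (v-1) 2]
    rw [this, mul_assoc]
    exact (h2v.mul_right _)
  have hqx : l ^ v ∣ (q : ℤ) * (l ^ (v - 1) * a) := by
    have hsq : s ^ q - 1 = (q : ℤ) * (l ^ (v - 1) * a) + (l ^ (v - 1) * a) ^ 2 * c := by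
      rw [hs, hc]; ring
    have h2' := h2
    rw [hsq] at h2'
    exact (dvd_add_right hx2).mp (by rwa [add_comm] at h2')
  have hla : l ∣ (q : ℤ) * a := by
    have hfac : l ^ v = l ^ (v - 1) * l := by
      rw [← pow_succ]
      congr 1
      omega
    have h3 : l ^ (v - 1) * l ∣ l ^ (v - 1) * ((q : ℤ) * a) := by
      rw [← hfac]
      have : (q : ℤ) * (l ^ (v - 1) * a) = l ^ (v - 1) * ((q : ℤ) * a) := by ring
      rwa [this] at hqx
    have hlne : l ^ (v - 1) ≠ 0 := pow_ne_zero _ hl.ne_zero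
    exact (mul_dvd_mul_iff_left hlne).mp h3
  have hla' : l ∣ a := (hl.dvd_mul.mp hla).resolve_left hq
  obtain ⟨a', rfl⟩ := hla'
  rw [ha]
  have hfac : l ^ v = l ^ (v - 1) * l := by
    rw [← pow_succ]
    congr 1
    omega
  rw [hfac]
  exact ⟨a', by ring⟩


lemma build_iso {G : Type*} [Group G] (l : ℕ) (hl : l.Prime) (x d : G)
    (hxd : x * d = d * x)
    (hxl : x ^ l = 1) (hdl : d ^ l = 1) (hx1 : x ≠ 1)
    (hdx : d ∉ Subgroup.zpowers x) :
    ∃ H : Subgroup G, Nonempty (Multiplicative (ZMod l × ZMod l) ≃* H) := by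
  haveI : Fact l.Prime := ⟨hl⟩
  haveI : NeZero l := ⟨hl.ne_zero⟩
  have hox : orderOf x = l := orderOf_eq_prime hxl hx1
  have hd1 : d ≠ 1 := fun h => hdx (h ▸ (Subgroup.zpowers x).one_mem)
  have hod : orderOf d = l := orderOf_eq_prime hdl hd1
  have hcomm' : ∀ (m n : ℕ), Commute (x ^ m) (d ^ n) :=
    fun m n => (Commute.pow_pow hxd m n)
  have hxmod : ∀ m : ℕ, x ^ (m % l) = x ^ m := fun m => by
    rw [← hox, pow_mod_orderOf]
  have hdmod : ∀ m : ℕ, d ^ (m % l) = d ^ m := fun m => by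
    rw [← hod, pow_mod_orderOf]
  let φ : Multiplicative (ZMod l × ZMod l) →* G :=
    { toFun := fun z => x ^ (z.toAdd.1.val) * d ^ (z.toAdd.2.val)
      map_one' := by simp
      map_mul' := by
        intro a b
        show x ^ ((a.toAdd.1 + b.toAdd.1).val) * d ^ ((a.toAdd.2 + b.toAdd.2).val)
            = (x ^ (a.toAdd.1.val) * d ^ (a.toAdd.2.val)) *
              (x ^ (b.toAdd.1.val) * d ^ (b.toAdd.2.val))
        rw [ZMod.val_add, ZMod.val_add, hxmod, hdmod, pow_add, pow_add]
        have h1 : d ^ ((Multiplicative.toAdd a).2.val) * x ^ ((Multiplicative.toAdd b).1.val)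
            = x ^ ((Multiplicative.toAdd b).1.val) * d ^ ((Multiplicative.toAdd a).2.val) :=
          ((hcomm' ((Multiplicative.toAdd b).1.val) ((Multiplicative.toAdd a).2.val)).symm).eq
        rw [mul_assoc, mul_assoc, ← mul_assoc (d ^ ((Multiplicative.toAdd a).2.val)), h1,
          mul_assoc] }
  have hφ : ∀ i j : ZMod l, φ (Multiplicative.ofAdd (i, j)) = x ^ i.val * d ^ j.val :=
    fun i j => rfl
  have hinj : Function.Injective φ := by
    rw [← MonoidHom.ker_eq_bot_iff, eq_bot_iff]
    intro z hz
    rw [MonoidHom.mem_ker] at hz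
    set i := (Multiplicative.toAdd z).1 with hi_def
    set j := (Multiplicative.toAdd z).2 with hj_def
    have hz' : x ^ i.val * d ^ j.val = 1 := hz
    have hj : j = 0 := by
      by_contra hj0
      have hjl : ¬ l ∣ j.val := by
        intro hdvd
        exact hj0 ((ZMod.val_eq_zero j).mp (Nat.eq_zero_of_dvd_of_lt hdvd (ZMod.val_lt j)))
      have hco : IsCoprime (l : ℤ) (j.val : ℤ) := by
        rw [Int.isCoprime_iff_gcd_eq_one, Int.gcd_natCast_natCast]
        exact hl.coprime_iff_not_dvd.mpr hjl
      obtain ⟨u, v, huv⟩ := hco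
      have hdj : d ^ (j.val : ℤ) = x ^ (-(i.val : ℤ)) := by
        have : d ^ (j.val : ℕ) = (x ^ (i.val : ℕ))⁻¹ := by
          rw [eq_inv_iff_mul_eq_one, (hcomm' i.val j.val).symm.eq]
          exact hz'
        rw [zpow_natCast, this, ← zpow_natCast x, ← zpow_neg]
      have : d ∈ Subgroup.zpowers x := by
        have hd' : d = (d ^ ((l : ℤ))) ^ u * (d ^ ((j.val : ℤ))) ^ v := by
          rw [← zpow_mul, ← zpow_mul, ← zpow_add, mul_comm (l:ℤ) u,
            mul_comm ((j.val:ℤ)) v, huv, zpow_one]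
        rw [hdj] at hd'
        rw [hd']
        have : d ^ (l : ℤ) = 1 := by rw [zpow_natCast, hdl]
        rw [this, one_zpow, one_mul, ← zpow_mul]
        exact zpow_mem (Subgroup.mem_zpowers x) _
      exact hdx this
    have hi : i = 0 := by
      rw [hj] at hz'
      simp only [ZMod.val_zero, pow_zero, mul_one] at hz'
      by_contra hi0
      have hnd : ¬ l ∣ i.val := fun hdvd =>
        hi0 ((ZMod.val_eq_zero i).mp (Nat.eq_zero_of_dvd_of_lt hdvd (ZMod.val_lt i)))
      have h2 := orderOf_dvd_of_pow_eq_one hz'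
      rw [hox] at h2
      exact hnd h2
    have hz0 : Multiplicative.toAdd z = 0 := by
      have hij : Multiplicative.toAdd z = (i, j) := rfl
      rw [hij, hi, hj]
      rfl
    have : z = Multiplicative.ofAdd 0 := by
      rw [← hz0]
      rfl
    rw [this]
    rfl
  exact ⟨φ.range, ⟨MonoidHom.ofInjective hinj⟩⟩

lemma abelian_case' {G : Type*} [Group G] [Finite G] (hc : ¬ IsCyclic G)
    (hcomm : ∀ a b : G, a * b = b * a) :
    ∃ (l : ℕ) (_ : l.Prime) (x d : G), x * d = d * x ∧ x ^ l = 1 ∧ d ^ l = 1 ∧ x ≠ 1 ∧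
      d ∉ Subgroup.zpowers x := by
  letI cg : CommGroup G := { (inferInstance : Group G) with mul_comm := hcomm }
  have he0 : Monoid.exponent G ≠ 0 := Monoid.exponent_ne_zero_of_finite
  obtain ⟨a, ha⟩ := Monoid.exists_orderOf_eq_exponent (G := G)
    (Monoid.ExponentExists.of_finite)
  set e := Monoid.exponent G with he_def
  have hepos : 0 < e := Nat.pos_of_ne_zero he0
  set A := Subgroup.zpowers a with hA_def
  have hAtop : A ≠ ⊤ := by
    intro h
    apply hc
    constructor
    refine ⟨a, fun x => ?_⟩
    have hx : x ∈ A := by rw [h]; exact Subgroup.mem_top x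
    exact hx
  obtain ⟨b, hb⟩ : ∃ b, b ∉ A := by
    by_contra h
    push_neg at h
    exact hAtop ((Subgroup.eq_top_iff' A).mpr h)
  haveI : A.Normal := ⟨fun n hn g => by rw [hcomm g n, mul_assoc, mul_inv_cancel, mul_one]; exact hn⟩
  set β : G ⧸ A := QuotientGroup.mk b with hβ_def
  have hβ1 : β ≠ 1 := by
    rw [hβ_def, Ne, QuotientGroup.eq_one_iff]
    exact hb
  set m := orderOf β with hm_def
  have hm_dvd : m ∣ e := by
    apply orderOf_dvd_of_pow_eq_one
    have : β ^ e = QuotientGroup.mk (b ^ e) := rfl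
    rw [this, Monoid.pow_exponent_eq_one b, QuotientGroup.mk_one]
  have hm0 : m ≠ 0 := by
    intro h
    rw [h] at hm_dvd
    exact he0 (Nat.eq_zero_of_zero_dvd hm_dvd)
  have hm1 : m ≠ 1 := fun h => hβ1 (orderOf_eq_one_iff.mp h)
  set l := m.minFac with hl_def
  have hl : l.Prime := Nat.minFac_prime hm1
  have hlm : l ∣ m := Nat.minFac_dvd m
  have hle : l ∣ e := hlm.trans hm_dvd
  set c := b ^ (m / l) with hc_def
  have hmlpos : 0 < m / l := Nat.div_pos (Nat.le_of_dvd (Nat.pos_of_ne_zero hm0) hlm) hl.pos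
  have hc_ne : (QuotientGroup.mk c : G ⧸ A) ≠ 1 := by
    have h1 : (QuotientGroup.mk c : G ⧸ A) = β ^ (m / l) := rfl
    rw [h1]
    exact pow_ne_one_of_lt_orderOf hmlpos.ne' (Nat.div_lt_self (Nat.pos_of_ne_zero hm0) hl.one_lt)
  have hcA : c ∉ A := fun h => hc_ne (QuotientGroup.eq_one_iff c |>.mpr h)
  have hclA : c ^ l ∈ A := by
    rw [← QuotientGroup.eq_one_iff]
    have h1 : (QuotientGroup.mk (c ^ l) : G ⧸ A) = β ^ (m / l * l) := by
      rw [← pow_mul]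
      rfl
    rw [h1, Nat.div_mul_cancel hlm, pow_orderOf_eq_one]
  obtain ⟨t, ht⟩ := Subgroup.mem_zpowers_iff.mp hclA
  have hce : c ^ e = 1 := Monoid.pow_exponent_eq_one c
  have key : a ^ (t * ((e / l : ℕ) : ℤ)) = 1 := by
    rw [zpow_mul, ht, zpow_natCast, ← pow_mul, Nat.mul_div_cancel' hle, hce]
  have hdvd : ((e : ℕ) : ℤ) ∣ t * ((e / l : ℕ) : ℤ) := by
    have := orderOf_dvd_iff_zpow_eq_one.mpr key
    rwa [ha] at this
  have hlt : (l : ℤ) ∣ t := by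
    have heq : ((e : ℕ) : ℤ) = (l : ℤ) * ((e / l : ℕ) : ℤ) := by
      exact_mod_cast (Nat.mul_div_cancel' hle).symm
    rw [heq] at hdvd
    have hne : ((e / l : ℕ) : ℤ) ≠ 0 := by
      have : 0 < e / l := Nat.div_pos (Nat.le_of_dvd hepos hle) hl.pos
      exact_mod_cast this.ne'
    exact (mul_dvd_mul_iff_right hne).mp hdvd
  obtain ⟨t', rfl⟩ := hlt
  set d := c * a ^ (-t' : ℤ) with hd_def
  have hdl : d ^ l = 1 := by
    rw [hd_def, mul_pow, ← ht, ← zpow_natCast (a ^ (-t' : ℤ)) l, ← zpow_mul, ← zpow_add]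
    have : (l : ℤ) * t' + -t' * (l : ℤ) = 0 := by ring
    rw [this, zpow_zero]
  have hdA : d ∉ A := by
    intro hd
    apply hcA
    have hca : c = d * a ^ (t' : ℤ) := by
      rw [hd_def, mul_assoc, ← zpow_add, neg_add_cancel, zpow_zero, mul_one]
    rw [hca]
    exact mul_mem hd (Subgroup.zpow_mem A (Subgroup.mem_zpowers a) t')
  set x := a ^ (e / l) with hx_def
  have hx1 : x ≠ 1 := by
    rw [hx_def]
    have h2 : e / l < orderOf a := by
      rw [ha]
      exact Nat.div_lt_self hepos hl.one_lt
    exact pow_ne_one_of_lt_orderOf (Nat.div_pos (Nat.le_of_dvd hepos hle) hl.pos).ne' h2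
  have hxl : x ^ l = 1 := by
    rw [hx_def, ← pow_mul, Nat.div_mul_cancel hle]
    exact Monoid.pow_exponent_eq_one a
  have hdx : d ∉ Subgroup.zpowers x := by
    intro hd
    apply hdA
    have hsub : Subgroup.zpowers x ≤ A :=
      Subgroup.zpowers_le.mpr (Subgroup.pow_mem A (Subgroup.mem_zpowers a) _)
    exact hsub hd
  exact ⟨l, hl, x, d, hcomm x d, hxl, hdl, hx1, hdx⟩

lemma abelian_case {G : Type*} [Group G] [Finite G] (hc : ¬ IsCyclic G)
    (hcomm : ∀ a b : G, a * b = b * a) : HasSQ G := by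
  obtain ⟨l, hl, x, d, hxd, hxl, hdl, hx1, hdx⟩ := abelian_case' hc hcomm
  obtain ⟨H, ⟨e⟩⟩ := build_iso l hl x d hxd hxl hdl hx1 hdx
  exact ⟨H, ⊥, inferInstance, Or.inl ⟨l, hl, ⟨(QuotientGroup.quotientBot (G := H)).trans e.symm⟩⟩⟩

lemma nonabelian_base {G : Type*} [Group G] [Finite G]
    (hsub : ∀ K : Subgroup G, K ≠ ⊤ → IsCyclic K)
    (hquot : ∀ K : Subgroup G, ∀ h : K.Normal, K ≠ ⊥ → (letI := h; IsCyclic (G ⧸ K)))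
    (hna : ¬ ∀ a b : G, a * b = b * a) : HasSQ G := by
  have hab₀ : ∃ a b : G, a * b ≠ b * a := by push_neg at hna; exact hna
  obtain ⟨a₀, b₀, hab₀⟩ := hab₀
  haveI : Nontrivial G := ⟨⟨a₀ * b₀, b₀ * a₀, hab₀⟩⟩
  have hnacomm : ¬ ∀ a b : G, a * b = b * a := fun h => hab₀ (h a₀ b₀)
  have hZ : Subgroup.center G = ⊥ := by
    by_contra hZ
    apply hnacomm
    intro a b
    haveI : IsCyclic (G ⧸ Subgroup.center G) := hquot (Subgroup.center G) inferInstance hZ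
    exact commutative_of_cyclic_center_quotient (QuotientGroup.mk' (Subgroup.center G))
      (QuotientGroup.ker_mk' _).le a b
  have hZnontriv : ¬ Nontrivial (Subgroup.center G) := by
    intro h
    rw [hZ] at h
    obtain ⟨x, y, hxy⟩ := h
    exact hxy (Subtype.ext ((Subgroup.mem_bot.mp x.2).trans (Subgroup.mem_bot.mp y.2).symm))
  -- Step 2 : a nontrivial proper normal subgroup
  have hcard1 : 1 < Nat.card G := Finite.one_lt_card
  set p := (Nat.card G).minFac with hp_def
  have hp : p.Prime := Nat.minFac_prime (by omega)
  haveI : Fact p.Prime := ⟨hp⟩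
  obtain ⟨P⟩ : Nonempty (Sylow p G) := inferInstance
  have hpdvd : p ∣ Nat.card G := Nat.minFac_dvd _
  have hPbot : (P : Subgroup G) ≠ ⊥ := by
    intro h
    have hcard := Sylow.card_eq_multiplicity P
    rw [h, Subgroup.card_bot] at hcard
    have h1 : 0 < (Nat.card G).factorization p :=
      Nat.Prime.factorization_pos_of_dvd hp (by omega) hpdvd
    have := Nat.one_lt_pow h1.ne' hp.one_lt
    omega
  have hPtop : (P : Subgroup G) ≠ ⊤ := by
    intro h
    apply hZnontriv
    have hpG : IsPGroup p G := by
      have h2 := P.2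
      rw [h] at h2
      exact h2.of_surjective (Subgroup.topEquiv : (⊤ : Subgroup G) ≃* G).toMonoidHom
        (Subgroup.topEquiv).surjective
    exact hpG.center_nontrivial
  obtain ⟨K₀, hK₀norm, hK₀bot, hK₀top⟩ :
      ∃ K₀ : Subgroup G, K₀.Normal ∧ K₀ ≠ ⊥ ∧ K₀ ≠ ⊤ := by
    by_cases hN : Subgroup.normalizer ((P : Subgroup G) : Set G) = ⊤
    · exact ⟨P, Subgroup.normalizer_eq_top_iff.mp hN, hPbot, hPtop⟩
    · have hcyc := hsub _ hN
      have hle : Subgroup.normalizer ((P : Subgroup G) : Set G) ≤ Subgroup.centralizer P := by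
        intro g hg
        rw [Subgroup.mem_centralizer_iff]
        intro h hh
        have hhn : h ∈ Subgroup.normalizer ((P : Subgroup G) : Set G) := Subgroup.le_normalizer hh
        exact congrArg Subtype.val (comm_of_isCyclic hcyc ⟨h, hhn⟩ ⟨g, hg⟩)
      have hcompl := MonoidHom.ker_transferSylow_isComplement' P hle
      refine ⟨(MonoidHom.transferSylow P hle).ker, inferInstance, ?_, ?_⟩
      · intro h
        have hcm := hcompl.card_mul
        rw [h, Subgroup.card_bot, one_mul] at hcm
        exact hPtop (Subgroup.eq_top_of_card_eq _ hcm)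
      · intro h
        have hcm := hcompl.card_mul
        rw [h, Subgroup.card_top] at hcm
        have : Nat.card (P : Subgroup G) = 1 := by
          have : 0 < Nat.card G := by omega
          nlinarith [Nat.card_pos (α := (P : Subgroup G))]
        exact hPbot (Subgroup.card_eq_one.mp this)
  -- Step 3 : K = centralizer of K₀
  set K := Subgroup.centralizer (K₀ : Set G) with hK_def
  have hK₀cyc := hsub K₀ hK₀top
  have hK₀K : K₀ ≤ K := by
    intro x hx
    rw [hK_def, Subgroup.mem_centralizer_iff]
    intro y hy
    exact congrArg Subtype.val (comm_of_isCyclic hK₀cyc ⟨y, hy⟩ ⟨x, hx⟩)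
  have hKtop : K ≠ ⊤ := by
    intro h
    apply hK₀bot
    rw [eq_bot_iff, ← hZ]
    intro x hx
    rw [Subgroup.mem_center_iff]
    intro g
    have hg : g ∈ K := by rw [h]; exact Subgroup.mem_top g
    rw [hK_def, Subgroup.mem_centralizer_iff] at hg
    exact (hg x hx).symm
  have hKnormal : K.Normal := by
    constructor
    intro n hn g
    rw [hK_def, Subgroup.mem_centralizer_iff] at hn ⊢
    intro h hh
    have h' : g⁻¹ * h * g ∈ (K₀ : Set G) := by
      have := hK₀norm.conj_mem h hh g⁻¹
      rwa [inv_inv] at this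
    have hcn := hn _ h'
    calc h * (g * n * g⁻¹) = g * ((g⁻¹ * h * g) * n) * g⁻¹ := by group
      _ = g * (n * (g⁻¹ * h * g)) * g⁻¹ := by rw [hcn]
      _ = g * n * g⁻¹ * h := by group
  have hKbot : K ≠ ⊥ := by
    intro h
    exact hK₀bot (eq_bot_iff.mpr (h ▸ hK₀K))
  have hKcyc : IsCyclic ↥K := hsub K hKtop
  haveI := hKnormal
  have hQcyc : IsCyclic (G ⧸ K) := hquot K hKnormal hKbot
  have hKcomm : ∀ x y, x ∈ K → y ∈ K → x * y = y * x := fun x y hx hy =>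
    congrArg Subtype.val (comm_of_isCyclic hKcyc ⟨x, hx⟩ ⟨y, hy⟩)
  -- Step 4 : the quotient has prime order q
  obtain ⟨γ, hγ⟩ := hQcyc.exists_generator
  obtain ⟨g, hg⟩ := QuotientGroup.mk'_surjective K γ
  set m := Nat.card (G ⧸ K) with hm_def
  have hγtop : Subgroup.zpowers γ = ⊤ := (Subgroup.eq_top_iff' _).mpr hγ
  have hordγ : orderOf γ = m := by
    rw [← Nat.card_zpowers, hγtop, Subgroup.card_top]
  have hm1 : 1 < m := by
    rw [hm_def, Finite.one_lt_card_iff_nontrivial]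
    obtain ⟨g₀, hg₀⟩ : ∃ x : G, x ∉ K := by
      by_contra hcon
      push_neg at hcon
      exact hKtop ((Subgroup.eq_top_iff' K).mpr hcon)
    exact ⟨QuotientGroup.mk g₀, 1, by rw [Ne, QuotientGroup.eq_one_iff]; exact hg₀⟩
  set q := m.minFac with hq_def
  have hq : q.Prime := Nat.minFac_prime (by omega)
  have hqm : q ∣ m := Nat.minFac_dvd m
  set h₁ := γ ^ (m / q) with hh₁_def
  set L := Subgroup.comap (QuotientGroup.mk' K) (Subgroup.zpowers h₁) with hL_def
  have hKL : K ≤ L := by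
    intro x hx
    show QuotientGroup.mk' K x ∈ Subgroup.zpowers h₁
    have h2 : QuotientGroup.mk' K x = 1 := (QuotientGroup.eq_one_iff x).mpr hx
    rw [h2]
    exact Subgroup.one_mem _
  have hg1ne : h₁ ≠ 1 := by
    rw [hh₁_def]
    apply pow_ne_one_of_lt_orderOf
    · have : 0 < m / q := Nat.div_pos (Nat.le_of_dvd (by omega) hqm) hq.pos
      omega
    · rw [hordγ]
      exact Nat.div_lt_self (by omega) hq.one_lt
  have hLtop : L = ⊤ := by
    by_contra hL
    have hLcyc := hsub L hL
    have hmkg1 : QuotientGroup.mk' K (g ^ (m / q)) = h₁ := by rw [map_pow, hg]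
    have hg1L : g ^ (m / q) ∈ L := by
      show QuotientGroup.mk' K (g ^ (m / q)) ∈ Subgroup.zpowers h₁
      rw [hmkg1]
      exact Subgroup.mem_zpowers _
    have hg1K : g ^ (m / q) ∉ K := by
      intro hk
      exact hg1ne (by rw [← hmkg1]; exact (QuotientGroup.eq_one_iff _).mpr hk)
    apply hg1K
    rw [hK_def, Subgroup.mem_centralizer_iff]
    intro y hy
    exact congrArg Subtype.val
      (comm_of_isCyclic hLcyc ⟨y, hKL (hK₀K hy)⟩ ⟨g ^ (m / q), hg1L⟩)
  have hzh : Subgroup.zpowers h₁ = ⊤ := by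
    have hmc := Subgroup.map_comap_eq_self_of_surjective
      (QuotientGroup.mk'_surjective K) (Subgroup.zpowers h₁)
    rw [← hmc, ← hL_def, hLtop]
    rw [← MonoidHom.range_eq_map]
    exact MonoidHom.range_eq_top_of_surjective _ (QuotientGroup.mk'_surjective K)
  have hordh : orderOf h₁ = m := by
    rw [← Nat.card_zpowers, hzh, Subgroup.card_top]
  have hmq : m = q := by
    have hhq : h₁ ^ q = 1 := by
      rw [hh₁_def, ← pow_mul, Nat.div_mul_cancel hqm, ← hordγ, pow_orderOf_eq_one]
    have hdq : orderOf h₁ ∣ q := orderOf_dvd_of_pow_eq_one hhq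
    rw [hordh] at hdq
    exact ((Nat.Prime.eq_one_or_self_of_dvd hq m hdq).resolve_left (by omega))
  -- facts about g
  have hγ1 : γ ≠ 1 := by
    intro h
    rw [h, orderOf_one] at hordγ
    omega
  have hgmk : (QuotientGroup.mk g : G ⧸ K) = γ := hg
  have hgK : g ∉ K := by
    intro h
    exact hγ1 (by rw [← hgmk]; exact (QuotientGroup.eq_one_iff g).mpr h)
  have hgq : g ^ q ∈ K := by
    rw [← QuotientGroup.eq_one_iff]
    have h2 : (QuotientGroup.mk (g ^ q) : G ⧸ K) = γ ^ q := by rw [← hgmk]; rfl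
    rw [h2, ← hmq, ← hordγ, pow_orderOf_eq_one]
  -- generator of K
  obtain ⟨κ, hκ⟩ := hKcyc.exists_generator
  set k : G := (κ : G) with hk_def
  have hkK : k ∈ K := κ.2
  set n := Nat.card K with hn_def
  have hordκ : orderOf κ = n := by
    rw [← Nat.card_zpowers, (Subgroup.eq_top_iff' _).mpr hκ, Subgroup.card_top]
  have hordk : orderOf k = n := by
    rw [← hordκ, hk_def]
    exact Subgroup.orderOf_coe κ
  have hn1 : 1 < n := by
    rw [hn_def]
    exact (Subgroup.one_lt_card_iff_ne_bot K).mpr hKbot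
  have hgen : ∀ x ∈ K, ∃ i : ℤ, k ^ i = x := by
    intro x hx
    obtain ⟨i, hi⟩ := Subgroup.mem_zpowers_iff.mp (hκ ⟨x, hx⟩)
    refine ⟨i, ?_⟩
    have h2 := congrArg (Subtype.val) hi
    rw [SubgroupClass.coe_zpow] at h2
    exact h2
  -- commutators land in nontrivial normal subgroups
  have hcomm_in : ∀ (J : Subgroup G), J.Normal → J ≠ ⊥ →
      ∀ x y : G, (y * x)⁻¹ * (x * y) ∈ J := by
    intro J hJ hJbot x y
    haveI := hJ
    have hc := hquot J hJ hJbot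
    have h2 := comm_of_isCyclic hc (QuotientGroup.mk x) (QuotientGroup.mk y)
    rw [← QuotientGroup.mk_mul, ← QuotientGroup.mk_mul] at h2
    exact (QuotientGroup.eq).mp h2.symm
  -- n is a prime power
  set l := n.minFac with hl_def
  have hl : l.Prime := Nat.minFac_prime (by omega)
  haveI : Fact l.Prime := ⟨hl⟩
  have hln : l ∣ n := Nat.minFac_dvd n
  set v := n.factorization l with hv_def
  set u := l ^ v with hu_def
  have hun : u ∣ n := Nat.ordProj_dvd n l
  set w := n / u with hw_def
  have hn0 : n ≠ 0 := by omega
  have huw : u * w = n := Nat.ordProj_mul_ordCompl_eq_self n l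
  have hvpos : 0 < v := Nat.Prime.factorization_pos_of_dvd hl hn0 hln
  have hu1 : 1 < u := by
    rw [hu_def]
    exact Nat.one_lt_pow hvpos.ne' hl.one_lt
  have hcop : Nat.Coprime u w := Nat.Coprime.pow_left v (Nat.coprime_ordCompl hl hn0)
  -- a small helper : elements k ^ (n / e) are nontrivial torsion elements
  have htor : ∀ e : ℕ, e ∣ n → 1 < e → k ^ (n / e) ∈ K ∧ (k ^ (n / e)) ^ e = 1 ∧
      k ^ (n / e) ≠ 1 := by
    intro e he he1
    refine ⟨Subgroup.pow_mem K hkK _, ?_, ?_⟩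
    · rw [← pow_mul, Nat.div_mul_cancel he, ← hordk, pow_orderOf_eq_one]
    · apply pow_ne_one_of_lt_orderOf
      · have : 0 < n / e := Nat.div_pos (Nat.le_of_dvd (by omega) he) (by omega)
        omega
      · rw [hordk]
        exact Nat.div_lt_self (by omega) he1
  have hw1 : w = 1 := by
    by_contra hw1
    have hw0 : w ≠ 0 := by
      intro h
      rw [h, mul_zero] at huw
      exact hn0 huw.symm
    have hwgt : 1 < w := Nat.lt_of_le_of_ne (Nat.one_le_iff_ne_zero.mpr hw0) (Ne.symm hw1)
    set U := torsionIn K hKcomm u with hU_def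
    set W := torsionIn K hKcomm w with hW_def
    have hUn : U.Normal := torsionIn_normal hKnormal hKcomm u
    have hWn : W.Normal := torsionIn_normal hKnormal hKcomm w
    have hUbot : U ≠ ⊥ := by
      obtain ⟨h1, h2, h3⟩ := htor u hun hu1
      intro hb
      exact h3 (Subgroup.mem_bot.mp (hb ▸ (torsionIn_mem.mpr ⟨h1, h2⟩)))
    have hWbot : W ≠ ⊥ := by
      have hwn : w ∣ n := ⟨u, by rw [← huw, mul_comm]⟩
      obtain ⟨h1, h2, h3⟩ := htor w hwn hwgt
      intro hb
      exact h3 (Subgroup.mem_bot.mp (hb ▸ (torsionIn_mem.mpr ⟨h1, h2⟩)))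
    apply hnacomm
    intro x y
    have h1 := (hcomm_in U hUn hUbot x y)
    have h2 := (hcomm_in W hWn hWbot x y)
    rw [hU_def, torsionIn_mem] at h1
    rw [hW_def, torsionIn_mem] at h2
    have hz : (y * x)⁻¹ * (x * y) = 1 := by
      have hd1 : orderOf ((y * x)⁻¹ * (x * y)) ∣ u := orderOf_dvd_of_pow_eq_one h1.2
      have hd2 : orderOf ((y * x)⁻¹ * (x * y)) ∣ w := orderOf_dvd_of_pow_eq_one h2.2
      have : orderOf ((y * x)⁻¹ * (x * y)) ∣ 1 := by
        rw [← hcop]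
        exact Nat.dvd_gcd hd1 hd2
      exact orderOf_eq_one_iff.mp (Nat.dvd_one.mp this)
    have := (inv_mul_eq_one.mp hz)
    exact this.symm
  have hnu : n = u := by rw [← huw, hw1, mul_one]
  -- q ≠ l
  have hcardG : Nat.card G = q * n := by
    rw [Subgroup.card_eq_card_quotient_mul_card_subgroup K, ← hm_def, ← hn_def, hmq]
  have hql : q ≠ l := by
    intro h
    apply hZnontriv
    have hpg : IsPGroup l G := IsPGroup.of_card (n := v + 1)
      (by rw [hcardG, hnu, hu_def, h, pow_succ, mul_comm])
    exact hpg.center_nontrivial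
  -- v = 1
  have hnl2 : ((n : ℕ) : ℤ) = (l : ℤ) ^ v := by
    rw [hnu, hu_def]
    push_cast
    ring
  have hveq : v = 1 := by
    by_contra hv1
    have hv2 : 2 ≤ v := by omega
    set P₁ := torsionIn K hKcomm l with hP₁_def
    have hP₁n : P₁.Normal := torsionIn_normal hKnormal hKcomm l
    have hP₁bot : P₁ ≠ ⊥ := by
      obtain ⟨h1, h2, h3⟩ := htor l hln hl.one_lt
      intro hb
      exact h3 (Subgroup.mem_bot.mp (hb ▸ (torsionIn_mem.mpr ⟨h1, h2⟩)))
    obtain ⟨s, hs⟩ := hgen (g⁻¹ * k * g) (by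
      have := hKnormal.conj_mem k hkK g⁻¹
      rwa [inv_inv] at this)
    have hc1 := hcomm_in P₁ hP₁n hP₁bot g k
    have hel : (k * g)⁻¹ * (g * k) = k ^ (1 - s) := by
      have h1 : g⁻¹ * k⁻¹ * g = (g⁻¹ * k * g)⁻¹ := by group
      calc (k * g)⁻¹ * (g * k) = (g⁻¹ * k⁻¹ * g) * k := by group
        _ = (g⁻¹ * k * g)⁻¹ * k := by rw [h1]
        _ = (k ^ s)⁻¹ * k ^ (1 : ℤ) := by rw [hs, zpow_one]
        _ = k ^ (-s) * k ^ (1 : ℤ) := by rw [zpow_neg]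
        _ = k ^ (-s + 1) := (zpow_add k _ _).symm
        _ = k ^ (1 - s) := by rw [neg_add_eq_sub]
    rw [hel, hP₁_def, torsionIn_mem] at hc1
    have hlne : (l : ℤ) ≠ 0 := by exact_mod_cast hl.pos.ne'
    have hdvd1 : ((l : ℤ) ^ (v - 1)) ∣ (1 - s) := by
      have hzz : k ^ ((1 - s) * (l : ℤ)) = 1 := by
        rw [zpow_mul, zpow_natCast, hc1.2]
      have h2 : ((n : ℕ) : ℤ) ∣ (1 - s) * (l : ℤ) := by
        have h3 := orderOf_dvd_iff_zpow_eq_one.mpr hzz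
        rwa [hordk] at h3
      have hnl3 : ((n : ℕ) : ℤ) = (l : ℤ) ^ (v - 1) * (l : ℤ) := by
        rw [hnl2, ← pow_succ]
        congr 1
        omega
      rw [hnl3] at h2
      exact (mul_dvd_mul_iff_right hlne).mp h2
    have hiter : ∀ j : ℕ, g⁻¹ ^ j * k * g ^ j = k ^ (s ^ j) := by
      intro j
      induction j with
      | zero => simp
      | succ i ih =>
        have hstep : g⁻¹ ^ (i + 1) * k * g ^ (i + 1) = g⁻¹ * (g⁻¹ ^ i * k * g ^ i) * g := by
          rw [pow_succ g⁻¹, pow_succ g]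
          group
        rw [hstep, ih]
        have hconj : g⁻¹ * k ^ (s ^ i) * g = (g⁻¹ * k * g) ^ (s ^ i) := by
          have h3 := map_zpow (MulAut.conj g⁻¹) k (s ^ i)
          simp only [MulAut.conj_apply, inv_inv] at h3
          exact h3
        rw [hconj, ← hs, ← zpow_mul]
        congr 1
        rw [pow_succ]
        ring
    have hkq : k ^ (s ^ q) = k := by
      have h4 := hiter q
      rw [inv_pow g q] at h4
      have h6 : (g ^ q)⁻¹ * k * g ^ q = k := by
        have hcm := hKcomm (g ^ q) k hgq hkK
        calc (g ^ q)⁻¹ * k * g ^ q = (g ^ q)⁻¹ * (k * g ^ q) := by group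
          _ = (g ^ q)⁻¹ * (g ^ q * k) := by rw [← hcm]
          _ = k := by group
      rw [← h4, h6]
    have hdvd2 : ((n : ℕ) : ℤ) ∣ s ^ q - 1 := by
      have h5 : k ^ (s ^ q - 1) = 1 := by
        rw [zpow_sub, hkq, zpow_one, mul_inv_cancel]
      have h7 := orderOf_dvd_iff_zpow_eq_one.mpr h5
      rwa [hordk] at h7
    have hlZ : Prime ((l : ℕ) : ℤ) := by
      rw [Int.prime_iff_natAbs_prime]
      simpa using hl
    have hndvd : ¬ ((l : ℤ)) ∣ ((q : ℕ) : ℤ) := by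
      rw [Int.natCast_dvd_natCast]
      intro h
      exact hql ((Nat.prime_dvd_prime_iff_eq hl hq).mp h).symm
    have h8 : ((l : ℤ)) ^ (v - 1) ∣ s - 1 := by
      have h9 : (1 - s) = -(s - 1) := by ring
      rw [h9] at hdvd1
      exact (dvd_neg.mp hdvd1)
    have h10 : ((l : ℤ)) ^ v ∣ s ^ q - 1 := by rwa [hnl2] at hdvd2
    have h11 := nt_lemma hlZ hv2 h8 h10 hndvd
    have hks : k ^ s = k := by
      have h12 : k ^ (s - 1) = 1 := by
        rw [← orderOf_dvd_iff_zpow_eq_one, hordk, hnl2]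
        exact h11
      calc k ^ s = k ^ (s - 1 + 1) := by congr 1; ring
        _ = k ^ (s - 1) * k ^ (1 : ℤ) := zpow_add k _ _
        _ = k := by rw [h12, one_mul, zpow_one]
    apply hgK
    rw [hK_def, Subgroup.mem_centralizer_iff]
    intro y hy
    obtain ⟨i, hi⟩ := hgen y (hK₀K hy)
    have h12 : g⁻¹ * k * g = k := by rw [← hs, hks]
    have h13 : g * k = k * g := by
      have h14 : g * (g⁻¹ * k * g) = g * k := congrArg (g * ·) h12
      calc g * k = g * (g⁻¹ * k * g) := h14.symm
        _ = k * g := by group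
    have hcgk : Commute g k := h13
    have hcy : Commute g y := by rw [← hi]; exact hcgk.zpow_right i
    exact hcy.symm.eq
  -- conclusion
  have hnl : n = l := by rw [hnu, hu_def, hveq, pow_one]
  let E : ((⊤ : Subgroup G) ⧸ (⊥ : Subgroup (⊤ : Subgroup G))) ≃* G :=
    (QuotientGroup.quotientBot (G := (⊤ : Subgroup G))).trans Subgroup.topEquiv
  refine ⟨⊤, ⊥, inferInstance, Or.inr ⟨q, l, hq, hl, hql, ?_, ?_⟩⟩
  · rw [Nat.card_congr E.toEquiv, hcardG, hnl]
  · refine ⟨E.symm a₀, E.symm b₀, ?_⟩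
    intro hcon
    apply hab₀
    have h15 := congrArg E hcon
    simpa using h15

lemma main_aux : ∀ (n : ℕ) (G : Type u) [Group G] [Finite G],
    Nat.card G = n → ¬ IsCyclic G → HasSQ G := by
  intro n
  induction n using Nat.strong_induction_on with
  | _ n IH =>
    intro G _ _ hn hG
    have hcardpos : 0 < Nat.card G := Nat.card_pos
    by_cases hsub : ∀ K : Subgroup G, K ≠ ⊤ → IsCyclic K
    · by_cases hquot : ∀ K : Subgroup G, ∀ h : K.Normal, K ≠ ⊥ → (letI := h; IsCyclic (G ⧸ K))
      · by_cases hcomm : ∀ a b : G, a * b = b * a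
        · exact abelian_case hG hcomm
        · exact nonabelian_base hsub hquot hcomm
      · push_neg at hquot
        obtain ⟨K, hKn, hKbot, hKnc⟩ := hquot
        haveI := hKn
        have hlt : Nat.card (G ⧸ K) < n := by
          rw [← hn]
          have h1 : Nat.card G = Nat.card (G ⧸ K) * Nat.card K :=
            Subgroup.card_eq_card_quotient_mul_card_subgroup K
          have h2 : 1 < Nat.card K := (Subgroup.one_lt_card_iff_ne_bot K).mpr hKbot
          calc Nat.card (G ⧸ K) < Nat.card (G ⧸ K) * Nat.card K := by
                have : 0 < Nat.card (G ⧸ K) := Nat.card_pos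
                nlinarith
            _ = Nat.card G := h1.symm
        exact hasSQ_of_quotient K hKn (IH _ hlt (G ⧸ K) rfl hKnc)
    · push_neg at hsub
      obtain ⟨K, hKtop, hKnc⟩ := hsub
      have hlt : Nat.card K < n := by
        rw [← hn]
        refine Nat.lt_of_le_of_ne (Nat.le_of_dvd hcardpos (Subgroup.card_subgroup_dvd_card K)) ?_
        intro h
        exact hKtop (Subgroup.eq_top_of_card_eq K h)
      exact hasSQ_of_subgroup K (IH _ hlt K rfl hKnc)

/-- Every finite non-cyclic group has a subquotient isomorphic to `(ℤ/lℤ) × (ℤ/lℤ)` for some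
prime `l`, or to a non-abelian group of order `p·l` for some pair of distinct primes `p`, `l`. -/
theorem finite_noncyclic_has_special_subquotient
    (G : Type*) [Group G] [Finite G] (hG : ¬ IsCyclic G) :
    ∃ (H : Subgroup G) (N : Subgroup H) (_ : N.Normal),
      ((∃ l : ℕ, l.Prime ∧ Nonempty ((H ⧸ N) ≃* Multiplicative (ZMod l × ZMod l))) ∨
       (∃ p l : ℕ, p.Prime ∧ l.Prime ∧ p ≠ l ∧ Nat.card (H ⧸ N) = p * l ∧
          ∃ a b : H ⧸ N, a * b ≠ b * a)) := by
  exact main_aux (Nat.card G) G rfl hG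
end

section
/- Let M/N be a finite Galois extension of number fields with Galois group G and let H ≤ G be a subgroup with fixed field M^H. The inclusion 𝒪_{M^H}^× ⊆ 𝒪_M^× induces an injective homomorphism E_{M^H} → (E_M)^H from the unit lattice of M^H into the H-fixed subgroup of the unit lattice of M. Then this image has finite index in (E_M)^H, and the index [(E_M)^H : E_{M^H}] equals the order of the kernel of the map H¹(H, μ(M)) → H¹(H, 𝒪_M^×) in group cohomology induced by the inclusion μ(M) ⊆ 𝒪_M^×. -/
open scoped BigOperators
open NumberField

noncomputable section

/-- The Galois action on the units of the ring of integers. -/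
instance galUnitsAction (k K : Type) [Field k] [Field K] [Algebra k K] :
    MulDistribMulAction (K ≃ₐ[k] K) (𝓞 K)ˣ where
  smul σ u := Units.map (RingOfIntegers.mapRingEquiv σ).toMonoidHom u
  one_smul u := by
    show Units.map _ u = u
    ext
    simp [RingOfIntegers.mapRingEquiv, RingOfIntegers.mapRingHom]
    rfl
  mul_smul σ τ u := by
    show Units.map _ u = Units.map _ (Units.map _ u)
    ext
    simp [RingOfIntegers.mapRingEquiv, RingOfIntegers.mapRingHom]
    rfl
  smul_mul σ u v := by
    show Units.map _ (u * v) = Units.map _ u * Units.map _ v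
    exact map_mul _ u v
  smul_one σ := map_one (Units.map _)

/-- The unit lattice E_K = 𝒪_K^× / μ(K). -/
abbrev unitLattice (K : Type) [Field K] : Type := (𝓞 K)ˣ ⧸ Units.torsion K

instance (K : Type) [Field K] : Module ℤ (Additive (unitLattice K)) :=
  AddCommGroup.toIntModule (Additive (unitLattice K))

lemma torsion_le_comap (k K : Type) [Field k] [Field K] [Algebra k K] (σ : K ≃ₐ[k] K) :
    Units.torsion K ≤ (Units.torsion K).comap
      (MulDistribMulAction.toMonoidHom (𝓞 K)ˣ σ) := fun _ hx =>
  (MulDistribMulAction.toMonoidHom (𝓞 K)ˣ σ).isOfFinOrder hx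

/-- The Galois action on the unit lattice. -/
instance galELatticeAction (k K : Type) [Field k] [Field K] [Algebra k K] :
    MulDistribMulAction (K ≃ₐ[k] K) (unitLattice K) where
  smul σ := QuotientGroup.map _ _ (MulDistribMulAction.toMonoidHom (𝓞 K)ˣ σ)
      (torsion_le_comap k K σ)
  one_smul u := by
    refine QuotientGroup.induction_on u (fun x => ?_)
    show QuotientGroup.map _ _ _ _ _ = _
    rw [QuotientGroup.map_mk]
    simp
  mul_smul σ τ u := by
    refine QuotientGroup.induction_on u (fun x => ?_)
    show QuotientGroup.map _ _ _ _ _ = QuotientGroup.map _ _ _ _ (QuotientGroup.map _ _ _ _ _)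
    rw [QuotientGroup.map_mk, QuotientGroup.map_mk, QuotientGroup.map_mk]
    simp [mul_smul]
  smul_mul σ u v := by
    refine QuotientGroup.induction_on u (fun x => ?_)
    refine QuotientGroup.induction_on v (fun y => ?_)
    show QuotientGroup.map _ _ _ _ _ = QuotientGroup.map _ _ _ _ _ * QuotientGroup.map _ _ _ _ _
    rw [← QuotientGroup.mk_mul, QuotientGroup.map_mk, QuotientGroup.map_mk, QuotientGroup.map_mk]
    simp [smul_mul', QuotientGroup.mk_mul]
  smul_one σ := by
    show QuotientGroup.map _ _ _ _ 1 = 1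
    simp

/-- The unit lattice E_K as a module over ℤ[Gal(K/k)]. -/
abbrev unitLatticeModule (k K : Type) [Field k] [Field K] [Algebra k K] : Type :=
  (Representation.ofMulDistribMulAction (K ≃ₐ[k] K) (unitLattice K)).asModule

end

noncomputable section

variable (k K : Type) [Field k] [Field K] [Algebra k K] (H : Subgroup (K ≃ₐ[k] K))

instance torsionGalAction : MulDistribMulAction H (Units.torsion K) where
  smul σ x := ⟨(σ : K ≃ₐ[k] K) • (x : (𝓞 K)ˣ),
    (MulDistribMulAction.toMonoidHom (𝓞 K)ˣ (σ : K ≃ₐ[k] K)).isOfFinOrder x.2⟩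
  one_smul x := Subtype.ext (by
    show ((1 : H) : K ≃ₐ[k] K) • (x : (𝓞 K)ˣ) = (x : (𝓞 K)ˣ)
    rw [OneMemClass.coe_one, one_smul])
  mul_smul σ τ x := Subtype.ext (by
    show ((σ * τ : H) : K ≃ₐ[k] K) • (x : (𝓞 K)ˣ) =
      ((σ : K ≃ₐ[k] K) • ((τ : K ≃ₐ[k] K) • (x : (𝓞 K)ˣ)))
    rw [Subgroup.coe_mul, mul_smul])
  smul_mul σ x y := Subtype.ext (by
    show (σ : K ≃ₐ[k] K) • ((x : (𝓞 K)ˣ) * (y : (𝓞 K)ˣ)) = _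
    rw [smul_mul']
    rfl)
  smul_one σ := Subtype.ext (by
    show (σ : K ≃ₐ[k] K) • (1 : (𝓞 K)ˣ) = (1 : (𝓞 K)ˣ)
    rw [smul_one])

/-- The roots of unity μ(K) as a representation of H. -/
def muRep : Rep ℤ H := Rep.ofMulDistribMulAction H (Units.torsion K)

/-- The units 𝒪_K^× as a representation of H. -/
def unitsRep : Rep ℤ H := Rep.ofMulDistribMulAction H (𝓞 K)ˣ

/-- The inclusion μ(K) → 𝒪_K^×, additively. -/
def inclLin : Additive (Units.torsion K) →ₗ[ℤ] Additive (𝓞 K)ˣ :=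
  (MonoidHom.toAdditive (Subgroup.subtype (Units.torsion K))).toIntLinearMap

lemma incl_cocycle (x : ↥H → Additive (Units.torsion K))
    (hx : x ∈ groupCohomology.cocycles₁ (muRep k K H)) :
    (LinearMap.compLeft (inclLin K) H) x ∈ groupCohomology.cocycles₁ (unitsRep k K H) := by
  have hx' := (groupCohomology.mem_cocycles₁_iff (A := muRep k K H) x).1 hx
  refine (groupCohomology.mem_cocycles₁_iff (A := unitsRep k K H) _).2 ?_
  intro g h
  have := hx' g h
  have h2 := congrArg (inclLin K) this
  exact h2.trans (map_add (inclLin K) ((muRep k K H).ρ g (x h)) (x g))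

end

noncomputable section
variable (k K : Type) [Field k] [Field K] [Algebra k K] (H : Subgroup (K ≃ₐ[k] K))

open groupCohomology

/-- The map on 1-cocycles induced by the inclusion μ(K) → 𝒪_K^×. -/
def cocyclesMap : cocycles₁ (muRep k K H) →ₗ[ℤ] cocycles₁ (unitsRep k K H) :=
  LinearMap.restrict (LinearMap.compLeft (inclLin K) H) (incl_cocycle k K H)

lemma incl_coboundary (x : cocycles₁ (muRep k K H))
    (hx : x ∈ (coboundaries₁ (muRep k K H)).comap (cocycles₁ (muRep k K H)).subtype) :
    cocyclesMap k K H x ∈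
      (coboundaries₁ (unitsRep k K H)).comap (cocycles₁ (unitsRep k K H)).subtype := by
  rw [Submodule.mem_comap, coboundaries₁, LinearMap.mem_range] at hx ⊢
  obtain ⟨y, hy⟩ := hx
  refine ⟨inclLin K y, funext fun g => ?_⟩
  have h2 : inclLin K ((muRep k K H).ρ g y - y) = inclLin K (x.1 g) :=
    congrArg (inclLin K) (congrFun hy g)
  exact h2.symm.trans (map_sub (inclLin K) ((muRep k K H).ρ g y) y) |>.symm

/-- The induced map H¹(H, μ(K)) → H¹(H, 𝒪_K^×). -/
def H1Map : (cocycles₁ (muRep k K H) ⧸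
      (coboundaries₁ (muRep k K H)).comap (cocycles₁ (muRep k K H)).subtype) →ₗ[ℤ]
    (cocycles₁ (unitsRep k K H) ⧸
      (coboundaries₁ (unitsRep k K H)).comap (cocycles₁ (unitsRep k K H)).subtype) :=
  Submodule.mapQ _ _ (cocyclesMap k K H) (incl_coboundary k K H)

/-- λ(H): the order of the kernel of H¹(H, μ(K)) → H¹(H, 𝒪_K^×). -/
def lambdaH : ℕ := Nat.card (LinearMap.ker (H1Map k K H))

end

noncomputable section

open NumberField

variable (N M : Type) [Field N] [Field M] [Algebra N M]

/-- The monoid homomorphism 𝒪_{M^H}^× → 𝒪_M^× induced by the inclusion of the fixed field. -/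
def unitsInclusion (H : Subgroup (M ≃ₐ[N] M)) :
    (𝓞 (IntermediateField.fixedField H))ˣ →* (𝓞 M)ˣ :=
  Units.map (RingOfIntegers.mapRingHom
    (algebraMap (IntermediateField.fixedField H) M)).toMonoidHom

lemma unitsInclusion_torsion_le (H : Subgroup (M ≃ₐ[N] M)) :
    Units.torsion (IntermediateField.fixedField H) ≤
      (Units.torsion M).comap (unitsInclusion N M H) := fun _ hx =>
  (unitsInclusion N M H).isOfFinOrder hx

/-- The induced homomorphism E_{M^H} → E_M on unit lattices. -/
def unitLatticeInclusion (H : Subgroup (M ≃ₐ[N] M)) :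
    unitLattice (IntermediateField.fixedField H) →* unitLattice M :=
  QuotientGroup.map _ _ (unitsInclusion N M H) (unitsInclusion_torsion_le N M H)

/-- The H-fixed points (E_M)^H of the unit lattice. -/
def fixedUnitSubgroup (H : Subgroup (M ≃ₐ[N] M)) : Subgroup (unitLattice M) where
  carrier := {x | ∀ σ ∈ H, σ • x = x}
  one_mem' := by intro σ _; rw [smul_one]
  mul_mem' := by intro a b ha hb σ hσ; rw [smul_mul', ha σ hσ, hb σ hσ]
  inv_mem' := by intro a ha σ hσ; rw [smul_inv', ha σ hσ]


set_option synthInstance.maxHeartbeats 1000000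
set_option maxHeartbeats 6000000

section Aux

open groupCohomology

variable {N M : Type} [Field N] [Field M] [Algebra N M] {H : Subgroup (M ≃ₐ[N] M)}

lemma lattice_smul_mk (σ : M ≃ₐ[N] M) (u : (𝓞 M)ˣ) :
    σ • (QuotientGroup.mk u : unitLattice M) = QuotientGroup.mk (σ • u) := rfl

lemma torsion_smul_coe (σ : H) (t : Units.torsion M) :
    ((σ • t : Units.torsion M) : (𝓞 M)ˣ) = (σ : M ≃ₐ[N] M) • (t : (𝓞 M)ˣ) := rfl

/-- The multiplicative 1-cochain `σ ↦ σ•u / u` at the level of units. -/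
def ccoe (H : Subgroup (M ≃ₐ[N] M)) (u : (𝓞 M)ˣ) (σ : H) : (𝓞 M)ˣ :=
  ((σ : M ≃ₐ[N] M) • u) * u⁻¹

lemma ccoe_mem {u : (𝓞 M)ˣ}
    (hu : (QuotientGroup.mk u : unitLattice M) ∈ fixedUnitSubgroup N M H) (σ : H) :
    ccoe H u σ ∈ Units.torsion M := by
  have h1 : (σ : M ≃ₐ[N] M) • (QuotientGroup.mk u : unitLattice M) = QuotientGroup.mk u :=
    hu (σ : M ≃ₐ[N] M) σ.2
  rw [lattice_smul_mk] at h1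
  have h2 := (QuotientGroup.eq (s := Units.torsion M)).1 h1
  have h3 := (Units.torsion M).inv_mem h2
  simpa [ccoe, mul_comm] using h3

lemma mem_fixed_of_ccoe_mem {u : (𝓞 M)ˣ} (h : ∀ σ : H, ccoe H u σ ∈ Units.torsion M) :
    (QuotientGroup.mk u : unitLattice M) ∈ fixedUnitSubgroup N M H := by
  intro σ hσ
  rw [lattice_smul_mk, QuotientGroup.eq]
  have h3 := (Units.torsion M).inv_mem (h ⟨σ, hσ⟩)
  simpa [ccoe, mul_comm] using h3

open Classical in
/-- The 1-cochain `σ ↦ σ•u / u` as a map into the torsion subgroup. -/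
def cUnit (H : Subgroup (M ≃ₐ[N] M)) (u : (𝓞 M)ˣ) (σ : H) : Units.torsion M :=
  if h : ccoe H u σ ∈ Units.torsion M then ⟨_, h⟩ else 1

lemma cUnit_coe {u : (𝓞 M)ˣ} {σ : H} (h : ccoe H u σ ∈ Units.torsion M) :
    ((cUnit H u σ : Units.torsion M) : (𝓞 M)ˣ) = ccoe H u σ := by
  rw [cUnit, dif_pos h]

variable (N) in
/-- The additive 1-cochain associated to `u`. -/
def zFun (H : Subgroup (M ≃ₐ[N] M)) (u : (𝓞 M)ˣ) : H → Additive (Units.torsion M) :=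
  fun σ => Additive.ofMul (cUnit H u σ)

lemma isMulOneCocycle_cUnit {u : (𝓞 M)ˣ}
    (hu : (QuotientGroup.mk u : unitLattice M) ∈ fixedUnitSubgroup N M H) :
    IsMulCocycle₁ (cUnit H u) := by
  intro g h
  apply Subtype.ext
  rw [Subgroup.coe_mul, torsion_smul_coe, cUnit_coe (ccoe_mem hu _), cUnit_coe (ccoe_mem hu _),
    cUnit_coe (ccoe_mem hu _)]
  show ccoe H u (g * h) = (g : M ≃ₐ[N] M) • ccoe H u h * ccoe H u g
  simp only [ccoe, Subgroup.coe_mul, mul_smul, smul_mul', smul_inv']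
  group

lemma zFun_mem_oneCocycles {u : (𝓞 M)ˣ}
    (hu : (QuotientGroup.mk u : unitLattice M) ∈ fixedUnitSubgroup N M H) :
    zFun N H u ∈ cocycles₁ (muRep N M H) :=
  (cocyclesOfIsMulCocycle₁ (isMulOneCocycle_cUnit hu)).2

variable (N) in
/-- The cohomology class in `H¹(H, μ(M))` associated to a fixed point of the unit lattice. -/
def cls (H : Subgroup (M ≃ₐ[N] M)) (u : (𝓞 M)ˣ)
    (hu : (QuotientGroup.mk u : unitLattice M) ∈ fixedUnitSubgroup N M H) :
    (cocycles₁ (muRep N M H) ⧸ (coboundaries₁ (muRep N M H)).comap (cocycles₁ (muRep N M H)).subtype) :=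
  ((coboundaries₁ (muRep N M H)).comap (cocycles₁ (muRep N M H)).subtype).mkQ ⟨zFun N H u, zFun_mem_oneCocycles hu⟩

lemma cls_mem_ker {u : (𝓞 M)ˣ}
    (hu : (QuotientGroup.mk u : unitLattice M) ∈ fixedUnitSubgroup N M H) :
    cls N H u hu ∈ LinearMap.ker (H1Map N M H) := by
  rw [LinearMap.mem_ker]
  simp only [cls, H1Map, Submodule.mkQ_apply, Submodule.mapQ_apply]
  change Submodule.Quotient.mk (p := ((coboundaries₁ (unitsRep N M H)).comap (cocycles₁ (unitsRep N M H)).subtype))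
    (cocyclesMap N M H ⟨zFun N H u, zFun_mem_oneCocycles hu⟩) = 0
  rw [Submodule.Quotient.mk_eq_zero]
  have hb : IsMulCoboundary₁ (fun σ : H => ccoe H u σ) := ⟨u, fun g => rfl⟩
  have key : cocyclesMap N M H ⟨zFun N H u, zFun_mem_oneCocycles hu⟩ =
      ⟨(coboundariesOfIsMulCoboundary₁ hb).1,
        coboundaries₁_le_cocycles₁ _ (coboundariesOfIsMulCoboundary₁ hb).2⟩ := by
    apply Subtype.ext
    funext σ
    show inclLin M (zFun N H u σ) = Additive.ofMul (ccoe H u σ)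
    show Additive.ofMul ((cUnit H u σ : (𝓞 M)ˣ)) = Additive.ofMul (ccoe H u σ)
    rw [cUnit_coe (ccoe_mem hu σ)]
  rw [key]
  exact (coboundariesOfIsMulCoboundary₁ hb).2

lemma cls_mul {u v : (𝓞 M)ˣ} (hu : (QuotientGroup.mk u : unitLattice M) ∈ fixedUnitSubgroup N M H)
    (hv : (QuotientGroup.mk v : unitLattice M) ∈ fixedUnitSubgroup N M H)
    (huv : (QuotientGroup.mk (u * v) : unitLattice M) ∈ fixedUnitSubgroup N M H) :
    cls N H (u * v) huv = cls N H u hu + cls N H v hv := by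
  simp only [cls, ← map_add]
  congr 1
  apply Subtype.ext
  funext σ
  show zFun N H (u * v) σ = Additive.ofMul (cUnit H u σ) + Additive.ofMul (cUnit H v σ)
  rw [zFun, ← ofMul_mul]
  congr 1
  apply Subtype.ext
  rw [Subgroup.coe_mul, cUnit_coe (ccoe_mem huv _), cUnit_coe (ccoe_mem hu _),
    cUnit_coe (ccoe_mem hv _)]
  rw [ccoe, ccoe, ccoe, smul_mul', mul_inv, mul_mul_mul_comm]

lemma cls_torsion {t : (𝓞 M)ˣ} (ht : t ∈ Units.torsion M)
    (h1 : (QuotientGroup.mk t : unitLattice M) ∈ fixedUnitSubgroup N M H) :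
    cls N H t h1 = 0 := by
  rw [cls, Submodule.mkQ_apply, Submodule.Quotient.mk_eq_zero]
  have hb : IsMulCoboundary₁ (cUnit H t) := by
    refine ⟨(⟨t, ht⟩ : Units.torsion M), fun g => ?_⟩
    apply Subtype.ext
    rw [cUnit_coe (ccoe_mem h1 _)]
    show ((g • (⟨t, ht⟩ : Units.torsion M) : Units.torsion M) : (𝓞 M)ˣ) * (t : (𝓞 M)ˣ)⁻¹ =
      ccoe H t g
    rw [torsion_smul_coe]
    rfl
  have key : (⟨zFun N H t, zFun_mem_oneCocycles h1⟩ : cocycles₁ (muRep N M H)) =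
      ⟨(coboundariesOfIsMulCoboundary₁ hb).1,
        coboundaries₁_le_cocycles₁ _ (coboundariesOfIsMulCoboundary₁ hb).2⟩ := rfl
  rw [key]
  exact (coboundariesOfIsMulCoboundary₁ hb).2

lemma cls_eq_of_eq {u v : (𝓞 M)ˣ} (h : u = v)
    (hu : (QuotientGroup.mk u : unitLattice M) ∈ fixedUnitSubgroup N M H)
    (hv : (QuotientGroup.mk v : unitLattice M) ∈ fixedUnitSubgroup N M H) :
    cls N H u hu = cls N H v hv := by subst h; rfl

lemma cls_congr {u v : (𝓞 M)ˣ}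
    (hu : (QuotientGroup.mk u : unitLattice M) ∈ fixedUnitSubgroup N M H)
    (hv : (QuotientGroup.mk v : unitLattice M) ∈ fixedUnitSubgroup N M H)
    (h : (QuotientGroup.mk u : unitLattice M) = QuotientGroup.mk v) :
    cls N H u hu = cls N H v hv := by
  have ht : u⁻¹ * v ∈ Units.torsion M := (QuotientGroup.eq (s := Units.torsion M)).1 h
  have hmk : (QuotientGroup.mk (u⁻¹ * v) : unitLattice M) = 1 := by
    rw [QuotientGroup.eq_one_iff]; exact ht
  have hfix : (QuotientGroup.mk (u⁻¹ * v) : unitLattice M) ∈ fixedUnitSubgroup N M H := by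
    rw [hmk]; exact (fixedUnitSubgroup N M H).one_mem
  have hfix2 : (QuotientGroup.mk (u * (u⁻¹ * v)) : unitLattice M) ∈ fixedUnitSubgroup N M H := by
    rw [QuotientGroup.mk_mul]; exact mul_mem hu hfix
  have h2 : cls N H v hv = cls N H (u * (u⁻¹ * v)) hfix2 :=
    cls_eq_of_eq (by group) _ _
  rw [h2, cls_mul hu hfix hfix2, cls_torsion ht hfix, add_zero]

end Aux


section Main

open groupCohomology

variable (N M : Type) [Field N] [Field M] [Algebra N M] (H : Subgroup (M ≃ₐ[N] M))

lemma out_mem_fixed (x : fixedUnitSubgroup N M H) :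
    (QuotientGroup.mk (x.1.out) : unitLattice M) ∈ fixedUnitSubgroup N M H := by
  rw [QuotientGroup.out_eq']; exact x.2

/-- The connecting map from the fixed points of the unit lattice to
`ker (H¹(H,μ(M)) → H¹(H,𝒪_Mˣ))`. -/
def Phi : fixedUnitSubgroup N M H →* Multiplicative (LinearMap.ker (H1Map N M H)) where
  toFun x := Multiplicative.ofAdd
    ⟨cls N H (x.1.out) (out_mem_fixed N M H x), cls_mem_ker _⟩
  map_one' := by
    have hone : (QuotientGroup.mk (1 : (𝓞 M)ˣ) : unitLattice M) ∈ fixedUnitSubgroup N M H := by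
      rw [QuotientGroup.mk_one]; exact one_mem _
    have h0 : cls N H (Quotient.out ((1 : fixedUnitSubgroup N M H).1))
        (out_mem_fixed N M H 1) = 0 := by
      rw [cls_congr _ hone (by rw [QuotientGroup.out_eq', QuotientGroup.mk_one]; rfl)]
      exact cls_torsion (one_mem _) hone
    exact congrArg Multiplicative.ofAdd (Subtype.ext h0)
  map_mul' x y := by
    have hx := out_mem_fixed N M H x
    have hy := out_mem_fixed N M H y
    have hxy : (QuotientGroup.mk (x.1.out * y.1.out) : unitLattice M) ∈
        fixedUnitSubgroup N M H := by
      rw [QuotientGroup.mk_mul]; exact mul_mem hx hy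
    have h0 : cls N H (Quotient.out ((x * y).1)) (out_mem_fixed N M H (x * y)) =
        cls N H (Quotient.out x.1) (out_mem_fixed N M H x) +
          cls N H (Quotient.out y.1) (out_mem_fixed N M H y) := by
      rw [cls_congr _ hxy (by
        rw [QuotientGroup.out_eq', QuotientGroup.mk_mul, QuotientGroup.out_eq',
          QuotientGroup.out_eq']; rfl)]
      exact cls_mul hx hy hxy
    exact congrArg Multiplicative.ofAdd (Subtype.ext h0)

lemma Phi_surjective : Function.Surjective (Phi N M H) := by
  intro k
  obtain ⟨z, hz⟩ := Submodule.mkQ_surjective ((coboundaries₁ (muRep N M H)).comap (cocycles₁ (muRep N M H)).subtype)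
    ((Multiplicative.toAdd k).1)
  have hker : H1Map N M H ((Multiplicative.toAdd k).1) = 0 := (Multiplicative.toAdd k).2
  rw [← hz] at hker
  simp only [H1Map, Submodule.mkQ_apply, Submodule.mapQ_apply] at hker
  change Submodule.Quotient.mk (p := ((coboundaries₁ (unitsRep N M H)).comap (cocycles₁ (unitsRep N M H)).subtype)) (cocyclesMap N M H z) = 0 at hker
  rw [Submodule.Quotient.mk_eq_zero] at hker
  obtain ⟨y, hy⟩ := hker
  have zz : H → Additive (Units.torsion M) := z.1
  set u : (𝓞 M)ˣ := Additive.toMul y with hu_def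
  have h5 : ∀ σ : H, ccoe H u σ =
      ((Additive.toMul (α := Units.torsion M) (z.1 σ) : Units.torsion M) : (𝓞 M)ˣ) := by
    intro σ
    exact congrArg Additive.toMul (congrFun hy σ)
  have hfix : (QuotientGroup.mk u : unitLattice M) ∈ fixedUnitSubgroup N M H :=
    mem_fixed_of_ccoe_mem (fun σ => by
      rw [h5 σ]; exact (Additive.toMul (α := Units.torsion M) (z.1 σ)).2)
  refine ⟨⟨QuotientGroup.mk u, hfix⟩, ?_⟩
  have h0 : cls N H (Quotient.out ((⟨QuotientGroup.mk u, hfix⟩ :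
      fixedUnitSubgroup N M H).1)) (out_mem_fixed N M H _) = (Multiplicative.toAdd k).1 := by
    rw [cls_congr _ hfix (QuotientGroup.out_eq' _), ← hz]
    rw [cls]
    congr 1
    apply Subtype.ext
    funext σ
    show Additive.ofMul (cUnit H u σ) =
      Additive.ofMul (Additive.toMul (α := Units.torsion M) (z.1 σ))
    congr 1
    apply Subtype.ext
    rw [cUnit_coe (ccoe_mem hfix σ), h5 σ]
  exact (congrArg Multiplicative.ofAdd (Subtype.ext h0)).trans (ofAdd_toAdd k)

lemma smul_unitsInclusion {σ : M ≃ₐ[N] M} (hσ : σ ∈ H)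
    (v : (𝓞 (IntermediateField.fixedField H))ˣ) :
    σ • unitsInclusion N M H v = unitsInclusion N M H v := by
  apply Units.ext
  apply NumberField.RingOfIntegers.ext
  show σ ((((unitsInclusion N M H v : (𝓞 M)ˣ) : 𝓞 M)) : M) = _
  have hmem : (((v : 𝓞 (IntermediateField.fixedField H)) : IntermediateField.fixedField H) : M)
      ∈ IntermediateField.fixedField H :=
    ((v : 𝓞 (IntermediateField.fixedField H)) : IntermediateField.fixedField H).2
  exact hmem ⟨σ, hσ⟩

lemma incl_mk_eq (v : (𝓞 (IntermediateField.fixedField H))ˣ) :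
    unitLatticeInclusion N M H (QuotientGroup.mk v) =
      QuotientGroup.mk (unitsInclusion N M H v) := rfl

lemma cls_unitsInclusion (v : (𝓞 (IntermediateField.fixedField H))ˣ)
    (hw : (QuotientGroup.mk (unitsInclusion N M H v) : unitLattice M) ∈
      fixedUnitSubgroup N M H) :
    cls N H (unitsInclusion N M H v) hw = 0 := by
  rw [cls]
  have : (⟨zFun N H (unitsInclusion N M H v), zFun_mem_oneCocycles hw⟩ :
      cocycles₁ (muRep N M H)) = 0 := by
    apply Subtype.ext
    funext σ
    show Additive.ofMul (cUnit H (unitsInclusion N M H v) σ) = 0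
    have h1 : cUnit H (unitsInclusion N M H v) σ = 1 := by
      apply Subtype.ext
      rw [cUnit_coe (ccoe_mem hw σ)]
      show ccoe H _ σ = (1 : (𝓞 M)ˣ)
      rw [ccoe, smul_unitsInclusion N M H σ.2 v, mul_inv_cancel]
    rw [h1]
    rfl
  rw [this, map_zero]

lemma mem_fixedField_of_smul_eq (w : (𝓞 M)ˣ) (hw : ∀ σ : H, (σ : M ≃ₐ[N] M) • w = w) :
    (((w : (𝓞 M)ˣ) : 𝓞 M) : M) ∈ IntermediateField.fixedField H := by
  intro σ
  show σ.1 (((w : (𝓞 M)ˣ) : 𝓞 M) : M) = _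
  conv_rhs => rw [← hw σ]
  rfl

/-- Produce a unit of the ring of integers of the fixed field from an `H`-fixed unit. -/
lemma exists_unitsInclusion_eq (w : (𝓞 M)ˣ) (hw : ∀ σ : H, (σ : M ≃ₐ[N] M) • w = w) :
    ∃ v : (𝓞 (IntermediateField.fixedField H))ˣ, unitsInclusion N M H v = w := by
  have hinv : ∀ σ : H, (σ : M ≃ₐ[N] M) • w⁻¹ = w⁻¹ := fun σ => by
    rw [smul_inv', hw σ]
  have hintA : IsIntegral ℤ
      (⟨_, mem_fixedField_of_smul_eq N M H w hw⟩ : IntermediateField.fixedField H) := by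
    rw [← isIntegral_algebraMap_iff
      (algebraMap (IntermediateField.fixedField H) M).injective]
    exact ((w : (𝓞 M)ˣ) : 𝓞 M).2
  have hintB : IsIntegral ℤ
      (⟨_, mem_fixedField_of_smul_eq N M H w⁻¹ hinv⟩ : IntermediateField.fixedField H) := by
    rw [← isIntegral_algebraMap_iff
      (algebraMap (IntermediateField.fixedField H) M).injective]
    exact ((w⁻¹ : (𝓞 M)ˣ) : 𝓞 M).2
  set A : 𝓞 (IntermediateField.fixedField H) := ⟨_, hintA⟩
  set B : 𝓞 (IntermediateField.fixedField H) := ⟨_, hintB⟩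
  have hAB : A * B = 1 := by
    apply NumberField.RingOfIntegers.ext
    apply Subtype.ext
    show ((((w : (𝓞 M)ˣ) : 𝓞 M)) : M) * ((((w⁻¹ : (𝓞 M)ˣ) : 𝓞 M)) : M) = 1
    have h1 : ((w : (𝓞 M)ˣ) : 𝓞 M) * ((w⁻¹ : (𝓞 M)ˣ) : 𝓞 M) = 1 := Units.mul_inv w
    exact_mod_cast congrArg (fun x : 𝓞 M => (x : M)) h1
  have hBA : B * A = 1 := by rw [mul_comm]; exact hAB
  refine ⟨⟨A, B, hAB, hBA⟩, ?_⟩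
  apply Units.ext
  apply NumberField.RingOfIntegers.ext
  rfl

private lemma comm_group_aux {α : Type} [CommGroup α] (a b c : α) : a * b * c * a⁻¹ = c * b := by
  rw [mul_right_comm (a * b) c a⁻¹, mul_right_comm a b a⁻¹, mul_inv_cancel, one_mul, mul_comm]

lemma exists_incl_eq_of_coboundary (u' : (𝓞 M)ˣ) (t : Units.torsion M)
    (h6 : ∀ σ : H, ccoe H u' σ = ((σ : M ≃ₐ[N] M) • (t : (𝓞 M)ˣ)) * ((t : (𝓞 M)ˣ))⁻¹) :
    ∃ v : unitLattice (IntermediateField.fixedField H),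
      unitLatticeInclusion N M H v = QuotientGroup.mk u' := by
  have hwfix : ∀ σ : H, (σ : M ≃ₐ[N] M) • (u' * ((t : (𝓞 M)ˣ))⁻¹) = u' * ((t : (𝓞 M)ˣ))⁻¹ := by
    intro σ
    have hsu : (σ : M ≃ₐ[N] M) • u' =
        ((σ : M ≃ₐ[N] M) • (t : (𝓞 M)ˣ)) * ((t : (𝓞 M)ˣ))⁻¹ * u' := by
      rw [← h6 σ, ccoe]; group
    rw [smul_mul', smul_inv', hsu]
    exact comm_group_aux _ _ _
  obtain ⟨v, hv⟩ := exists_unitsInclusion_eq N M H _ hwfix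
  refine ⟨QuotientGroup.mk v, ?_⟩
  rw [incl_mk_eq, hv, QuotientGroup.eq]
  have h9 : (u' * ((t : (𝓞 M)ˣ))⁻¹)⁻¹ * u' = (t : (𝓞 M)ˣ) := by group
  rw [h9]
  exact t.2

lemma Phi_ker_eq : (Phi N M H).ker =
    (unitLatticeInclusion N M H).range.subgroupOf (fixedUnitSubgroup N M H) := by
  ext x
  rw [MonoidHom.mem_ker, Subgroup.mem_subgroupOf (H := (unitLatticeInclusion N M H).range) (K := fixedUnitSubgroup N M H) (h := x), MonoidHom.mem_range]
  constructor
  · intro h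
    set u' : (𝓞 M)ˣ := x.1.out with hu'
    have h' : cls N H u' (out_mem_fixed N M H x) = 0 :=
      Subtype.ext_iff.1 (congrArg Multiplicative.toAdd h)
    rw [cls, Submodule.mkQ_apply, Submodule.Quotient.mk_eq_zero] at h'
    obtain ⟨y, hy⟩ := h'
    obtain ⟨t, rfl⟩ : ∃ t : Units.torsion M, Additive.ofMul t = y :=
      ⟨Additive.toMul (α := Units.torsion M) y, rfl⟩
    have h6 : ∀ σ : H, ccoe H u' σ = ((σ : M ≃ₐ[N] M) • (t : (𝓞 M)ˣ)) * ((t : (𝓞 M)ˣ))⁻¹ := by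
      intro σ
      have h7 : σ • t * t⁻¹ = cUnit H u' σ := congrArg Additive.toMul (congrFun hy σ)
      have h8 := congrArg (fun (s : Units.torsion M) => (s : (𝓞 M)ˣ)) h7
      rw [← cUnit_coe (ccoe_mem (out_mem_fixed N M H x) σ), ← h8]
      rw [Subgroup.coe_mul, Subgroup.coe_inv, torsion_smul_coe]
    obtain ⟨v, hv⟩ := exists_incl_eq_of_coboundary N M H u' t h6
    exact ⟨v, by rw [hv, hu', QuotientGroup.out_eq']⟩
  · rintro ⟨v, hv⟩
    obtain ⟨v0, rfl⟩ := QuotientGroup.mk_surjective v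
    rw [incl_mk_eq] at hv
    have hw : (QuotientGroup.mk (unitsInclusion N M H v0) : unitLattice M) ∈
        fixedUnitSubgroup N M H := by rw [hv]; exact x.2
    have h0 : cls N H (Quotient.out x.1) (out_mem_fixed N M H x) = 0 := by
      rw [cls_congr _ hw (by rw [QuotientGroup.out_eq', hv])]
      exact cls_unitsInclusion N M H v0 hw
    exact congrArg Multiplicative.ofAdd (Subtype.ext h0)

lemma unitsInclusion_injective : Function.Injective (unitsInclusion N M H) := by
  intro a b hab
  have h2 := congrArg (fun u : (𝓞 M)ˣ => (((u : (𝓞 M)ˣ) : 𝓞 M) : M)) hab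
  apply Units.ext
  apply NumberField.RingOfIntegers.ext
  apply Subtype.val_injective
  exact h2

lemma Phi_index : (unitLatticeInclusion N M H).range.relIndex (fixedUnitSubgroup N M H) =
    lambdaH N M H := by
  have e1 : (unitLatticeInclusion N M H).range.relIndex (fixedUnitSubgroup N M H) =
      ((unitLatticeInclusion N M H).range.subgroupOf (fixedUnitSubgroup N M H)).index := rfl
  rw [e1, ← Phi_ker_eq N M H, Subgroup.index_ker,
    MonoidHom.range_eq_top.2 (Phi_surjective N M H)]
  exact Nat.card_congr (Subgroup.topEquiv.toEquiv.trans Multiplicative.ofAdd.symm)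

end Main

/-- Remark 3.18: for a Galois extension M/N with group G and H ≤ G, the inclusion
𝒪_{M^H}^× ⊆ 𝒪_M^× induces an injective homomorphism E_{M^H} → (E_M)^H whose image has
finite index equal to λ(H), the order of the kernel of H¹(H, μ(M)) → H¹(H, 𝒪_M^×). -/
theorem index_of_unitLattice_fixedPoints_eq_lambda
    [NumberField N] [NumberField M] [IsGalois N M] (H : Subgroup (M ≃ₐ[N] M)) :
    (∀ x, unitLatticeInclusion N M H x ∈ fixedUnitSubgroup N M H) ∧
    Function.Injective (unitLatticeInclusion N M H) ∧
    0 < (unitLatticeInclusion N M H).range.relIndex (fixedUnitSubgroup N M H) ∧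
    (unitLatticeInclusion N M H).range.relIndex (fixedUnitSubgroup N M H) =
      lambdaH N M H := by
  haveI : FiniteDimensional N M := Module.Finite.right ℚ N M
  refine ⟨?_, ?_, ?_, Phi_index N M H⟩
  · intro x
    refine QuotientGroup.induction_on x (fun v0 => ?_)
    rw [incl_mk_eq]
    intro σ hσ
    rw [lattice_smul_mk, smul_unitsInclusion N M H hσ v0]
  · rw [injective_iff_map_eq_one]
    intro a
    refine QuotientGroup.induction_on a (fun v0 => ?_)
    intro h1
    rw [incl_mk_eq, QuotientGroup.eq_one_iff] at h1
    rw [QuotientGroup.eq_one_iff]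
    have hfin : IsOfFinOrder (unitsInclusion N M H v0) := h1
    obtain ⟨n, hn, hpow⟩ := isOfFinOrder_iff_pow_eq_one.1 hfin
    have hv : v0 ^ n = 1 := by
      apply unitsInclusion_injective N M H
      rw [map_pow, hpow, map_one]
    exact isOfFinOrder_iff_pow_eq_one.2 ⟨n, hn, hv⟩
  · rw [Phi_index N M H, lambdaH]
    haveI : Finite (CoeSort.coe (muRep N M H)) :=
      (inferInstance : Finite (Additive (Units.torsion M)))
    haveI : Finite (groupCohomology.cocycles₁ (muRep N M H)) := Subtype.finite
    haveI : Finite (groupCohomology.cocycles₁ (muRep N M H) ⧸ (groupCohomology.coboundaries₁ (muRep N M H)).comap (groupCohomology.cocycles₁ (muRep N M H)).subtype) :=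
      Finite.of_surjective _ (Submodule.mkQ_surjective ((groupCohomology.coboundaries₁ (muRep N M H)).comap (groupCohomology.cocycles₁ (muRep N M H)).subtype))
    haveI : Finite (LinearMap.ker (H1Map N M H)) := Subtype.finite
    exact Nat.card_pos

end
end
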